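/- arXiv:1609.09793 — 8 statements merged into one kernel-verified Lean document; each statement's English description precedes it below -/
import Mathlib

section
/- Let K₀ be a number field and K a quadratic field extension of K₀, and let † denote the nontrivial element of the Galois group Gal(K/K₀). An order O in K satisfies O† = O if and only if O ∩ K₀ = (O + O†) ∩ K₀, where O + O† denotes the additive subgroup of K generated by O and O†. -/
/-- An order in a number field `K`: a subring (equivalently, a `ℤ`-subalgebra) of `K` that is
finitely generated as a `ℤ`-module and contains a `ℚ`-basis of `K` (i.e. spans `K` over `ℚ`). -/
def IsOrder (K : Type*) [Field K] [NumberField K] (O : Subalgebra ℤ K) : Prop :=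
  (Subalgebra.toSubmodule O).FG ∧ Submodule.span ℚ (O : Set K) = ⊤

/-!
The Galois group of a quadratic extension `K/K₀` has order `2`, so its nontrivial element `σ` is an
involution whose fixed field is `K₀`. If `O ∩ K₀ = (O + σO) ∩ K₀`, then for `x ∈ O` the trace
`x + σx` lies in `(O + σO) ∩ K₀ ⊆ O`, hence `σx ∈ O`; so `σO ⊆ O`, and `σO = O` as `σ` is an
involution.
-/

namespace Submodule

variable {R M : Type*} [Ring R] [AddCommGroup M] [Module R M]

theorem map_eq_self_iff_inter_eq_sup_map_inter (p : Submodule R M) {τ : M →ₗ[R] M}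
    (hτ : Function.Involutive τ) {F : Set M} (hF : ∀ x, τ x = x → x ∈ F) :
    p.map τ = p ↔ (p : Set M) ∩ F = ((p ⊔ p.map τ : Submodule R M) : Set M) ∩ F := by
  refine ⟨fun h ↦ by rw [h, sup_idem], fun h ↦ ?_⟩
  have hmaps : ∀ x ∈ p, τ x ∈ p := by
    intro x hx
    have htrace : x + τ x ∈ ((p ⊔ p.map τ : Submodule R M) : Set M) ∩ F :=
      ⟨add_mem (mem_sup_left hx) (mem_sup_right (mem_map_of_mem hx)),
        hF _ (by rw [map_add, hτ, add_comm])⟩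
    rw [← h] at htrace
    simpa using sub_mem htrace.1 hx
  refine le_antisymm (map_le_iff_le_comap.mpr hmaps) fun x hx ↦ ?_
  exact ⟨τ x, hmaps x hx, hτ x⟩

end Submodule

namespace Algebra.IsQuadraticExtension

variable {F K : Type*} [Field F] [Field K] [Algebra F K] [IsQuadraticExtension F K]

theorem natCard_galois_eq_two {σ : Gal(K/F)} (hσ : σ ≠ 1) : Nat.card Gal(K/F) = 2 := by
  have hle : Nat.card Gal(K/F) ≤ 2 := by
    rw [Nat.card_eq_fintype_card, ← finrank_eq_two F K]
    exact AlgEquiv.card_le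
  have : Nontrivial Gal(K/F) := ⟨⟨σ, 1, hσ⟩⟩
  have hgt : 1 < Nat.card Gal(K/F) := Finite.one_lt_card
  omega

theorem orderOf_eq_two {σ : Gal(K/F)} (hσ : σ ≠ 1) : orderOf σ = 2 := by
  have hdvd : orderOf σ ∣ 2 := natCard_galois_eq_two hσ ▸ orderOf_dvd_natCard σ
  exact ((Nat.dvd_prime Nat.prime_two).mp hdvd).resolve_left (orderOf_eq_one_iff.not.mpr hσ)

theorem involutive (σ : Gal(K/F)) : Function.Involutive σ := by
  by_cases hσ : σ = 1
  · subst hσ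
    exact fun _ ↦ rfl
  · have hsq : σ ^ 2 = 1 := orderOf_eq_two hσ ▸ pow_orderOf_eq_one σ
    exact fun x ↦ by simpa [sq] using DFunLike.congr_fun hsq x

theorem apply_eq_self_iff {σ : Gal(K/F)} (hσ : σ ≠ 1) (x : K) :
    σ x = x ↔ x ∈ Set.range (algebraMap F K) := by
  refine ⟨fun hx ↦ ?_, fun ⟨a, ha⟩ ↦ ha ▸ σ.commutes a⟩
  have : IsGalois F K := IsGalois.of_card_aut_eq_finrank F K <| by
    rw [natCard_galois_eq_two hσ, finrank_eq_two]
  have hzpowers : Subgroup.zpowers σ = ⊤ := Subgroup.eq_top_of_card_eq _ <| by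
    rw [Nat.card_zpowers, orderOf_eq_two hσ, natCard_galois_eq_two hσ]
  have hfixed : x ∈ IntermediateField.fixedField (⊤ : Subgroup Gal(K/F)) := by
    rw [← hzpowers, IntermediateField.mem_fixedField_iff, Subgroup.forall_mem_zpowers]
    exact fun j ↦ MulAction.mem_fixedBy_zpow (g := σ) hx j
  rw [IsGalois.fixedField_top] at hfixed
  exact IntermediateField.mem_bot.mp hfixed

end Algebra.IsQuadraticExtension

theorem order_conjugation_stable_iff_general (K₀ K : Type*) [Field K₀]
    [Field K] [Algebra K₀ K] (h2 : Module.finrank K₀ K = 2)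
    (σ : K ≃ₐ[K₀] K) (hσ : σ ≠ AlgEquiv.refl)
    (O : Subalgebra ℤ K) :
    O.map (RingHom.toIntAlgHom σ.toRingEquiv.toRingHom) = O ↔
      (O : Set K) ∩ Set.range (algebraMap K₀ K) =
        ((Subalgebra.toSubmodule O ⊔
            Subalgebra.toSubmodule (O.map (RingHom.toIntAlgHom σ.toRingEquiv.toRingHom)) :
          Submodule ℤ K) : Set K) ∩ Set.range (algebraMap K₀ K) := by
  have : Algebra.IsQuadraticExtension K₀ K := ⟨h2⟩
  rw [← Subalgebra.toSubmodule_injective.eq_iff, Subalgebra.map_toSubmodule]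
  exact (Subalgebra.toSubmodule O).map_eq_self_iff_inter_eq_sup_map_inter
    (Algebra.IsQuadraticExtension.involutive σ)
    fun x ↦ (Algebra.IsQuadraticExtension.apply_eq_self_iff hσ x).mp

/-- Let `K / K₀` be a quadratic extension of number fields with nontrivial Galois
automorphism `σ = †`.  An order `O` in `K` satisfies `O† = O` if and only if
`O ∩ K₀ = (O + O†) ∩ K₀`. -/
theorem order_conjugation_stable_iff (K₀ K : Type*) [Field K₀] [NumberField K₀]
    [Field K] [NumberField K] [Algebra K₀ K] (h2 : Module.finrank K₀ K = 2)
    (σ : K ≃ₐ[K₀] K) (hσ : σ ≠ AlgEquiv.refl)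
    (O : Subalgebra ℤ K) (hO : IsOrder K O) :
    O.map (RingHom.toIntAlgHom σ.toRingEquiv.toRingHom) = O ↔
      (O : Set K) ∩ Set.range (algebraMap K₀ K) =
        ((Subalgebra.toSubmodule O ⊔
            Subalgebra.toSubmodule (O.map (RingHom.toIntAlgHom σ.toRingEquiv.toRingHom)) :
          Submodule ℤ K) : Set K) ∩ Set.range (algebraMap K₀ K) :=
  order_conjugation_stable_iff_general K₀ K h2 σ hσ O
end

section
/- Let K₀ be a number field, K a quadratic field extension of K₀, with rings of integers O_{K₀} ⊆ O_K. Let 𝔣 and 𝔤 be nonzero ideals of O_K with 𝔣 ⊆ 𝔤 (i.e. 𝔤 divides 𝔣), and let π : O_K → O_K/𝔣 be the canonical projection. Then π(O_{K₀}) ∩ π(𝔤) = π(O_{K₀} ∩ 𝔤); consequently the cardinality of π(O_{K₀}) ∩ π(𝔤) equals the cardinality of the quotient group (O_{K₀} ∩ 𝔤)/(O_{K₀} ∩ 𝔣). -/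
open NumberField

set_option synthInstance.maxHeartbeats 1000000 in
set_option maxHeartbeats 1000000 in
/-- Let `K / K₀` be a quadratic extension of number fields with rings of integers
`𝓞 K₀ ⊆ 𝓞 K`.  Let `𝔣 ⊆ 𝔤` be nonzero ideals of `𝓞 K` and `π : 𝓞 K → 𝓞 K ⧸ 𝔣` the
canonical projection.  Then `π(𝓞 K₀) ∩ π(𝔤) = π(𝓞 K₀ ∩ 𝔤)`; consequently the cardinality
of `π(𝓞 K₀) ∩ π(𝔤)` equals that of the additive quotient `(𝓞 K₀ ∩ 𝔤) / (𝓞 K₀ ∩ 𝔣)`. -/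
theorem proj_real_cap_ideal (K₀ K : Type*) [Field K₀] [NumberField K₀]
    [Field K] [NumberField K] [Algebra K₀ K] (h2 : Module.finrank K₀ K = 2)
    (𝔣 𝔤 : Ideal (𝓞 K)) (h𝔣 : 𝔣 ≠ ⊥) (h𝔤 : 𝔤 ≠ ⊥) (hle : 𝔣 ≤ 𝔤) :
    (Ideal.Quotient.mk 𝔣 '' Set.range (algebraMap (𝓞 K₀) (𝓞 K))) ∩
        (Ideal.Quotient.mk 𝔣 '' (𝔤 : Set (𝓞 K))) =
      Ideal.Quotient.mk 𝔣 ''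
        (Set.range (algebraMap (𝓞 K₀) (𝓞 K)) ∩ (𝔤 : Set (𝓞 K))) ∧
    Nat.card ((Ideal.Quotient.mk 𝔣 '' Set.range (algebraMap (𝓞 K₀) (𝓞 K))) ∩
        (Ideal.Quotient.mk 𝔣 '' (𝔤 : Set (𝓞 K))) : Set ((𝓞 K) ⧸ 𝔣)) =
      Nat.card
        (((Submodule.toAddSubgroup 𝔤).comap (algebraMap (𝓞 K₀) (𝓞 K)).toAddMonoidHom) ⧸
          (((Submodule.toAddSubgroup 𝔣).comap
              (algebraMap (𝓞 K₀) (𝓞 K)).toAddMonoidHom).addSubgroupOf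
            ((Submodule.toAddSubgroup 𝔤).comap (algebraMap (𝓞 K₀) (𝓞 K)).toAddMonoidHom))) := by
  set f := algebraMap (𝓞 K₀) (𝓞 K) with hf
  have hset : (Ideal.Quotient.mk 𝔣 '' Set.range f) ∩ (Ideal.Quotient.mk 𝔣 '' (𝔤 : Set (𝓞 K)))
      = Ideal.Quotient.mk 𝔣 '' (Set.range f ∩ (𝔤 : Set (𝓞 K))) := by
    apply subset_antisymm
    · rintro x ⟨⟨a, ⟨y, rfl⟩, rfl⟩, ⟨g, hg, hgx⟩⟩
      have hd : f y - g ∈ 𝔣 := by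
        rw [← Ideal.Quotient.eq_zero_iff_mem]
        simp [map_sub, hgx]
      refine ⟨f y, ⟨⟨y, rfl⟩, ?_⟩, rfl⟩
      have : f y - g ∈ 𝔤 := hle hd
      simpa using 𝔤.add_mem this hg
    · exact Set.subset_inter (Set.image_mono Set.inter_subset_left)
        (Set.image_mono Set.inter_subset_right)
  refine ⟨hset, ?_⟩
  rw [hset]
  set G := (Submodule.toAddSubgroup 𝔤).comap f.toAddMonoidHom with hG
  set F := (Submodule.toAddSubgroup 𝔣).comap f.toAddMonoidHom with hF
  let φ : G →+ (𝓞 K ⧸ 𝔣) :=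
    ((Ideal.Quotient.mk 𝔣).toAddMonoidHom.comp f.toAddMonoidHom).comp G.subtype
  have hrange : ((φ.range : AddSubgroup _) : Set (𝓞 K ⧸ 𝔣))
      = Ideal.Quotient.mk 𝔣 '' (Set.range f ∩ (𝔤 : Set (𝓞 K))) := by
    ext x
    constructor
    · rintro ⟨⟨y, hy⟩, rfl⟩
      exact ⟨f y, ⟨⟨y, rfl⟩, hy⟩, rfl⟩
    · rintro ⟨a, ⟨⟨y, rfl⟩, hy⟩, rfl⟩
      exact ⟨⟨y, hy⟩, rfl⟩
  have hker : φ.ker = F.addSubgroupOf G := by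
    ext ⟨y, hy⟩
    rw [AddMonoidHom.mem_ker, AddSubgroup.mem_addSubgroupOf]
    exact Ideal.Quotient.eq_zero_iff_mem
  calc Nat.card (Ideal.Quotient.mk 𝔣 '' (Set.range f ∩ (𝔤 : Set (𝓞 K))))
      = Nat.card φ.range := by rw [← hrange]; rfl
    _ = Nat.card (G ⧸ F.addSubgroupOf G) := by
        rw [← hker]
        exact Nat.card_congr (QuotientAddGroup.quotientKerEquivRange φ).symm.toEquiv
end

section
/- Let K₀ be a number field and K a quadratic field extension of K₀, with rings of integers O_{K₀} ⊆ O_K, and let † denote the nontrivial element of Gal(K/K₀). Let O be an order in K containing O_{K₀}, and let 𝔣 = {x ∈ K : x·O_K ⊆ O} be its conductor. Then O† = O, and 𝔣 is generated by an ideal of O_{K₀}: namely 𝔣 = (𝔣 ∩ O_{K₀})·O_K. -/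
open NumberField

/-- The ring of integers of `K₀` viewed as a subset of `K`. -/
noncomputable def realIntegers (K₀ K : Type*) [Field K₀] [NumberField K₀] [Field K]
    [NumberField K] [Algebra K₀ K] : Set K :=
  Set.range (fun a : 𝓞 K₀ => algebraMap K₀ K (algebraMap (𝓞 K₀) K₀ a))

/-- The conductor of a subset `O` of `K`: the set `{x ∈ K : x · 𝓞 K ⊆ O}`. -/
def conductorSet (K : Type*) [Field K] [NumberField K] (O : Set K) : Set K :=
  {x : K | ∀ y : 𝓞 K, x * algebraMap (𝓞 K) K y ∈ O}

/-!
Since `x + σ x` is the trace of `x`, which lies in `𝓞 K₀` when `x` is integral, `σ x = tr x - x`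
stays in `O`. For the conductor `𝔣`, pick `ω ∈ 𝓞 K` with `σ ω ≠ ω` and put `θ = ω - σ ω`, so that
`σ θ = -θ` and `λ t = tr (θ t) = θ (t - σ t)` is a `K₀`-linear form, `𝓞 K₀`-valued on `𝓞 K`.
The identity `λ(w) x = λ(x w) - λ(x) σ(w)` shows that `e λ(u) ∈ 𝔣 ∩ 𝓞 K₀` for `u ∈ O` and `e` in the
inverse of the nonzero ideal `B = λ(𝓞 K)` of `𝓞 K₀`, and, for `x ∈ 𝔣`, that `λ(w) e x` is an
`𝓞 K`-combination of such elements. As `B B⁻¹ = 𝓞 K₀`, this gives `x ∈ (𝔣 ∩ 𝓞 K₀) 𝓞 K`.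
-/

open scoped nonZeroDivisors

theorem IsDedekindDomain.one_mem_of_forall_mul_mem {A F : Type*} [CommRing A] [IsDedekindDomain A]
    [Field F] [Algebra A F] [IsFractionRing A F] {S : Set F}
    (hS : S ⊆ Set.range (algebraMap A F)) {s₀ : F} (hs₀ : s₀ ∈ S) (hs₀_ne : s₀ ≠ 0)
    {N : Submodule A F}
    (hN : ∀ s ∈ S, ∀ e : F, (∀ b ∈ S, e * b ∈ Set.range (algebraMap A F)) → s * e ∈ N) :
    (1 : F) ∈ N := by
  let B : FractionalIdeal A⁰ F := ⟨Submodule.span A S, FractionalIdeal.isFractional_of_le_one _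
    (Submodule.span_le.mpr fun s hs => Submodule.mem_one.mpr (hS hs))⟩
  have hB : B ≠ 0 := by
    intro h
    have hs₀B : s₀ ∈ B := Submodule.subset_span hs₀
    rw [h, FractionalIdeal.mem_zero_iff] at hs₀B
    exact hs₀_ne hs₀B
  have hone : (1 : F) ∈ ((B * B⁻¹ : FractionalIdeal A⁰ F) : Submodule A F) := by
    rw [mul_inv_cancel₀ hB]
    exact FractionalIdeal.one_mem_one _
  rw [FractionalIdeal.coe_mul, ← Submodule.span_eq ((B⁻¹ : FractionalIdeal A⁰ F) : Submodule A F),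
    show (B : Submodule A F) = Submodule.span A S from rfl, Submodule.span_mul_span] at hone
  refine Submodule.span_le.mpr ?_ hone
  rintro _ ⟨s, hs, e, he, rfl⟩
  exact hN s hs e fun b hb => (FractionalIdeal.mem_one_iff _).mp
    ((FractionalIdeal.mem_inv_iff hB).mp he b (Submodule.subset_span hb))

namespace AlgEquiv

variable {K₀ K : Type*} [Field K₀] [Field K] [Algebra K₀ K] (h2 : Module.finrank K₀ K = 2)
  {σ : K ≃ₐ[K₀] K} (hσ : σ ≠ 1)
include h2 hσ

theorem eq_one_or_eq_of_finrank_eq_two (τ : K ≃ₐ[K₀] K) : τ = 1 ∨ τ = σ := by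
  classical
  have : FiniteDimensional K₀ K := .of_finrank_eq_succ h2
  by_contra! hτ
  have h3 : ({τ, 1, σ} : Finset Gal(K/K₀)).card = 3 := by
    rw [Finset.card_insert_of_notMem (by simp [hτ.1, hτ.2]), Finset.card_pair hσ.symm]
  have := (Finset.card_le_univ {τ, 1, σ}).trans (AlgEquiv.card_le (F := K₀) (K := K))
  omega

theorem isGalois_of_finrank_eq_two : IsGalois K₀ K := by
  have : FiniteDimensional K₀ K := .of_finrank_eq_succ h2
  refine IsGalois.of_card_aut_eq_finrank K₀ K ?_
  rw [h2, Nat.card_eq_two_iff]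
  exact ⟨1, σ, hσ.symm, Set.eq_univ_of_forall fun τ => eq_one_or_eq_of_finrank_eq_two h2 hσ τ⟩

theorem algebraMap_trace_eq_add (x : K) :
    algebraMap K₀ K (Algebra.trace K₀ K x) = x + σ x := by
  have : FiniteDimensional K₀ K := .of_finrank_eq_succ h2
  have := isGalois_of_finrank_eq_two h2 hσ
  rw [trace_eq_sum_automorphisms, Fintype.sum_eq_add 1 σ hσ.symm, one_apply]
  intro τ hτ
  exact ((eq_one_or_eq_of_finrank_eq_two h2 hσ τ).elim hτ.1 hτ.2).elim

theorem apply_apply_of_finrank_eq_two (x : K) : σ (σ x) = x := by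
  have htr := algebraMap_trace_eq_add h2 hσ x
  have htr_conj := congrArg σ htr
  rw [commutes, map_add] at htr_conj
  linear_combination htr - htr_conj

theorem algebraMap_traceForm_of_apply_eq_neg {θ : K} (hθ : σ θ = -θ) (t : K) :
    algebraMap K₀ K (Algebra.traceForm K₀ K θ t) = θ * (t - σ t) := by
  rw [Algebra.traceForm_apply, algebraMap_trace_eq_add h2 hσ, map_mul, hθ]
  ring

theorem algebraMap_traceForm_mul {θ : K} (hθ : σ θ = -θ) (t z : K) :
    algebraMap K₀ K (Algebra.traceForm K₀ K θ z) * t =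
      algebraMap K₀ K (Algebra.traceForm K₀ K θ (t * z)) -
        algebraMap K₀ K (Algebra.traceForm K₀ K θ t) * σ z := by
  simp only [algebraMap_traceForm_of_apply_eq_neg h2 hσ hθ, map_mul]
  ring

end AlgEquiv

section NumberField

variable {K₀ K : Type*} [Field K₀] [NumberField K₀] [Field K] [NumberField K] [Algebra K₀ K]

theorem algebraMap_mem_realIntegers {a : K₀} (ha : a ∈ Set.range (algebraMap (𝓞 K₀) K₀)) :
    algebraMap K₀ K a ∈ realIntegers K₀ K := by
  obtain ⟨b, rfl⟩ := ha
  exact ⟨b, rfl⟩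

theorem algebraMap_trace_mem_realIntegers {z : K} (hz : IsIntegral ℤ z) :
    algebraMap K₀ K (Algebra.trace K₀ K z) ∈ realIntegers K₀ K :=
  algebraMap_mem_realIntegers ⟨⟨_, Algebra.isIntegral_trace hz⟩, rfl⟩

omit [NumberField K₀] in
theorem exists_apply_ne_of_ne_one {σ : K ≃ₐ[K₀] K} (hσ : σ ≠ 1) : ∃ ω : 𝓞 K, σ ω ≠ ω := by
  by_contra! h
  refine hσ (AlgEquiv.ext fun z => ?_)
  obtain ⟨a, b, -, rfl⟩ := IsFractionRing.div_surjective (A := 𝓞 K) z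
  rw [map_div₀, h, h, AlgEquiv.one_apply]

def conductorSubmodule (O : Subalgebra ℤ K) : Submodule (𝓞 K) K where
  carrier := conductorSet K O
  add_mem' {x y} hx hy z := by rw [add_mul]; exact O.add_mem (hx z) (hy z)
  zero_mem' z := by rw [zero_mul]; exact O.zero_mem
  smul_mem' c x hx z := by
    rw [Algebra.smul_def, mul_right_comm, ← map_mul, mul_comm]
    exact hx (c * z)

variable (h2 : Module.finrank K₀ K = 2) {σ : K ≃ₐ[K₀] K} (hσ : σ ≠ 1)
  {O : Subalgebra ℤ K} (hint : ∀ x ∈ O, IsIntegral ℤ x) (hRM : realIntegers K₀ K ⊆ O)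
include h2 hσ hint hRM

theorem apply_mem_of_mem {x : K} (hx : x ∈ O) : σ x ∈ O := by
  have htr := AlgEquiv.algebraMap_trace_eq_add h2 hσ x
  rw [show σ x = algebraMap K₀ K (Algebra.trace K₀ K x) - x by linear_combination -htr]
  exact O.sub_mem (hRM (algebraMap_trace_mem_realIntegers (hint x hx))) hx

theorem map_eq_self_of_realIntegers_subset :
    O.map (RingHom.toIntAlgHom σ.toRingEquiv.toRingHom) = O := by
  ext y
  refine ⟨?_, fun hy => ⟨σ y, apply_mem_of_mem h2 hσ hint hRM hy,
    AlgEquiv.apply_apply_of_finrank_eq_two h2 hσ y⟩⟩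
  rintro ⟨x, hx, rfl⟩
  exact apply_mem_of_mem h2 hσ hint hRM hx

section TraceForm

variable {θ : K} (hθ : σ θ = -θ) {e : K₀}
  (he : ∀ w : 𝓞 K, e * Algebra.traceForm K₀ K θ w ∈ Set.range (algebraMap (𝓞 K₀) K₀))
include hθ he

theorem algebraMap_mul_traceForm_mem_conductorSet_inter {u : K} (hu : u ∈ O) :
    algebraMap K₀ K (e * Algebra.traceForm K₀ K θ u) ∈
      conductorSet K O ∩ realIntegers K₀ K := by
  have hreal (w : 𝓞 K) : algebraMap K₀ K (e * Algebra.traceForm K₀ K θ w) ∈ realIntegers K₀ K :=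
    algebraMap_mem_realIntegers (he w)
  let u' : 𝓞 K := ⟨u, hint u hu⟩
  refine ⟨fun y => ?_, hreal u'⟩
  have hkey := AlgEquiv.algebraMap_traceForm_mul h2 hσ hθ (algebraMap (𝓞 K) K y) u
  rw [show algebraMap K₀ K (e * Algebra.traceForm K₀ K θ u) * algebraMap (𝓞 K) K y =
      algebraMap K₀ K (e * Algebra.traceForm K₀ K θ (algebraMap (𝓞 K) K y * u)) -
        algebraMap K₀ K (e * Algebra.traceForm K₀ K θ y) * σ u by
    simp only [map_mul]
    linear_combination (algebraMap K₀ K e) * hkey]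
  exact O.sub_mem (hRM (hreal (y * u')))
    (O.mul_mem (hRM (hreal y)) (apply_mem_of_mem h2 hσ hint hRM hu))

theorem algebraMap_traceForm_mul_mul_mem_span {x : K} (hx : x ∈ conductorSet K O) (w : 𝓞 K) :
    algebraMap K₀ K (Algebra.traceForm K₀ K θ w * e) * x ∈
      Submodule.span (𝓞 K) (conductorSet K O ∩ realIntegers K₀ K) := by
  have hxO : x ∈ O := by simpa using hx 1
  have hkey := AlgEquiv.algebraMap_traceForm_mul h2 hσ hθ x w
  let σw : 𝓞 K := ⟨σ w, w.isIntegral_coe.map (σ.toAlgHom.restrictScalars ℤ)⟩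
  rw [show algebraMap K₀ K (Algebra.traceForm K₀ K θ w * e) * x =
      algebraMap K₀ K (e * Algebra.traceForm K₀ K θ (x * w)) -
        σw • algebraMap K₀ K (e * Algebra.traceForm K₀ K θ x) by
    rw [Algebra.smul_def, show algebraMap (𝓞 K) K σw = σ w from rfl]
    simp only [map_mul]
    linear_combination (algebraMap K₀ K e) * hkey]
  have hmem {u : K} (hu : u ∈ O) :=
    algebraMap_mul_traceForm_mem_conductorSet_inter h2 hσ hint hRM hθ he hu
  exact Submodule.sub_mem _ (Submodule.subset_span (hmem (hx w)))
    (Submodule.smul_mem _ _ (Submodule.subset_span (hmem hxO)))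

end TraceForm

theorem conductorSet_subset_span :
    conductorSet K O ⊆ Submodule.span (𝓞 K) (conductorSet K O ∩ realIntegers K₀ K) := by
  intro x hx
  obtain ⟨ω, hω⟩ := exists_apply_ne_of_ne_one hσ
  set θ : K := ω - σ ω
  have hθ : σ θ = -θ := by simp [θ, AlgEquiv.apply_apply_of_finrank_eq_two h2 hσ]
  have hθ_ne : θ ≠ 0 := sub_ne_zero.mpr hω.symm
  have hθ_int : IsIntegral ℤ θ :=
    ω.isIntegral_coe.sub (ω.isIntegral_coe.map (σ.toAlgHom.restrictScalars ℤ))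
  -- `N = {t : K₀ | t x ∈ (𝔣 ∩ 𝓞 K₀) 𝓞 K}`
  let N : Submodule (𝓞 K₀) K₀ :=
    ((Submodule.span (𝓞 K) (conductorSet K O ∩ realIntegers K₀ K)).restrictScalars (𝓞 K₀)).comap
      (((LinearMap.mulRight K₀ x).comp (Algebra.linearMap K₀ K)).restrictScalars (𝓞 K₀))
  have hone : (1 : K₀) ∈ N := by
    refine IsDedekindDomain.one_mem_of_forall_mul_mem
      (S := Set.range fun w : 𝓞 K => Algebra.traceForm K₀ K θ w) ?_ (Set.mem_range_self ω) ?_ ?_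
    · rintro _ ⟨w, rfl⟩
      exact ⟨⟨_, Algebra.isIntegral_trace (hθ_int.mul w.isIntegral_coe)⟩, rfl⟩
    · intro h
      have hω_image := AlgEquiv.algebraMap_traceForm_of_apply_eq_neg h2 hσ hθ ω
      rw [h, map_zero] at hω_image
      exact mul_self_ne_zero.mpr hθ_ne hω_image.symm
    · rintro _ ⟨w, rfl⟩ e he
      exact algebraMap_traceForm_mul_mul_mem_span h2 hσ hint hRM hθ (fun w => he _ ⟨w, rfl⟩) hx w
  simpa [N] using hone

end NumberField

/-- Let `K / K₀` be a quadratic extension of number fields with nontrivial Galois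
automorphism `σ = †`, and let `O` be an order of `K` containing the ring of integers of
`K₀`, with conductor `𝔣`.  Then `O† = O`, and `𝔣` is generated by an ideal of `𝓞 K₀`:
namely `𝔣 = (𝔣 ∩ 𝓞 K₀) · 𝓞 K`. -/
theorem maxRM_order_conj_stable_and_conductor_real (K₀ K : Type*) [Field K₀] [NumberField K₀]
    [Field K] [NumberField K] [Algebra K₀ K] (h2 : Module.finrank K₀ K = 2)
    (σ : K ≃ₐ[K₀] K) (hσ : σ ≠ AlgEquiv.refl)
    (O : Subalgebra ℤ K) (hO : IsOrder K O)
    (hRM : realIntegers K₀ K ⊆ (O : Set K)) :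
    O.map (RingHom.toIntAlgHom σ.toRingEquiv.toRingHom) = O ∧
      conductorSet K (O : Set K) =
        (Submodule.span (𝓞 K) (conductorSet K (O : Set K) ∩ realIntegers K₀ K) :
          Submodule (𝓞 K) K) := by
  have hint (x : K) (hx : x ∈ O) : IsIntegral ℤ x := IsIntegral.of_mem_of_fg O hO.1 x hx
  refine ⟨map_eq_self_of_realIntegers_subset h2 hσ hint hRM,
    (conductorSet_subset_span h2 hσ hint hRM).antisymm ?_⟩
  exact Submodule.span_le (p := conductorSubmodule O).mpr Set.inter_subset_left
end

section
/- Let K₀ be a number field and K a quadratic field extension of K₀, with rings of integers O_{K₀} ⊆ O_K. Let 𝔣₀ be a nonzero ideal of O_{K₀} and set R = O_{K₀}/𝔣₀. Then there exists α ∈ O_K such that the quotient O_K/𝔣₀O_K, viewed as an R-module via the canonical map O_{K₀} → O_K/𝔣₀O_K, decomposes as O_K/𝔣₀O_K = R·1 ⊕ R·ᾱ, where ᾱ is the class of α; that is, every element of O_K/𝔣₀O_K is uniquely of the form x·1 + y·ᾱ with x, y ∈ R. -/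
/-!
Choose a nonzero `𝓞 K₀`-linear form `φ : 𝓞 K → 𝓞 K₀` vanishing exactly on `𝓞 K₀` (a coordinate
of `K` over `K₀` complementary to `1`, with denominators cleared), so that `𝓞 K ⧸ 𝓞 K₀` is
isomorphic to the nonzero ideal `I = φ (𝓞 K)`. In a Dedekind domain `I = (x) + 𝔣₀ I` for some
`x = φ α`. This makes every class mod `𝔣₀ 𝓞 K` of the form `a + b α`; conversely, if
`a + b α ∈ 𝔣₀ 𝓞 K` then `(b) I ⊆ 𝔣₀ I`, so `b ∈ 𝔣₀` after cancelling `I`, and then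
`a ∈ 𝔣₀ 𝓞 K ∩ 𝓞 K₀ = 𝔣₀` by faithful flatness of `𝓞 K` over `𝓞 K₀`.
-/

open NumberField LinearMap

namespace Ideal

variable {A : Type*} [CommRing A] [IsDedekindDomain A]

theorem le_of_mul_le_mul_right {J J' I : Ideal A} (hI : I ≠ ⊥) (h : J * I ≤ J' * I) : J ≤ J' :=
  Ideal.le_of_dvd <| (mul_dvd_mul_iff_right hI).mp (Ideal.dvd_iff_le.mpr h)

end Ideal

namespace LinearMap

variable {A B : Type*} [CommRing A] [CommRing B] [Algebra A B] (φ : B →ₗ[A] A) (𝔣 : Ideal A)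

theorem map_restrictScalars_map_algebraMap :
    ((𝔣.map (algebraMap A B)).restrictScalars A).map φ = 𝔣 * range φ := by
  rw [← Ideal.smul_top_eq_map, Submodule.map_smul'', Submodule.map_top, smul_eq_mul]

variable {φ 𝔣}

theorem exists_sub_add_mul_mem_map
    (hker : ker φ = range (Algebra.linearMap A B)) {α : B}
    (hα : range φ ≤ Ideal.span {φ α} ⊔ 𝔣 * range φ) (z : B) :
    ∃ e a : A, z - (algebraMap A B e + algebraMap A B a * α) ∈ 𝔣.map (algebraMap A B) := by
  obtain ⟨_, hx, _, hg, hz⟩ := Submodule.mem_sup.mp (hα ⟨z, rfl⟩)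
  obtain ⟨a, rfl⟩ := Ideal.mem_span_singleton'.mp hx
  rw [← φ.map_restrictScalars_map_algebraMap] at hg
  obtain ⟨v, hv, rfl⟩ := hg
  have : z - a • α - v ∈ ker φ := by
    rw [mem_ker, map_sub, map_sub, map_smul, smul_eq_mul, ← hz, sub_sub, sub_self]
  obtain ⟨e, he⟩ := hker ▸ this
  refine ⟨e, a, ?_⟩
  rw [Algebra.linearMap_apply] at he
  rw [he, ← Algebra.smul_def, show z - (z - a • α - v + a • α) = v by abel]
  exact hv

theorem mem_of_add_mul_mem_map [IsDedekindDomain A] [Module.FaithfullyFlat A B]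
    (hker : range (Algebra.linearMap A B) ≤ ker φ) (hφ : range φ ≠ ⊥) {α : B}
    (hα : range φ ≤ Ideal.span {φ α} ⊔ 𝔣 * range φ) {e a : A}
    (h : algebraMap A B e + algebraMap A B a * α ∈ 𝔣.map (algebraMap A B)) :
    e ∈ 𝔣 ∧ a ∈ 𝔣 := by
  have hφe : φ (algebraMap A B e) = 0 := hker ⟨e, rfl⟩
  have haα : a * φ α ∈ 𝔣 * range φ := by
    rw [← φ.map_restrictScalars_map_algebraMap]
    refine ⟨_, h, ?_⟩
    rw [map_add, hφe, zero_add, ← Algebra.smul_def, map_smul, smul_eq_mul]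
  have ha : a ∈ 𝔣 := by
    have : Ideal.span {a} * range φ ≤ 𝔣 * range φ := by
      refine (Ideal.mul_mono_right hα).trans ?_
      rw [Ideal.mul_sup, Ideal.span_singleton_mul_span_singleton]
      exact sup_le ((Ideal.span_singleton_le_iff_mem _).mpr haα) Ideal.mul_le_right
    exact (Ideal.span_singleton_le_iff_mem _).mp (Ideal.le_of_mul_le_mul_right hφ this)
  refine ⟨?_, ha⟩
  rw [← Ideal.comap_map_eq_self_of_faithfullyFlat (B := B) 𝔣, Ideal.mem_comap]
  simpa using sub_mem h (Ideal.mul_mem_right α _ (Ideal.mem_map_of_mem _ ha))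

theorem exists_existsUnique_quotientMap_add_mul [IsDedekindDomain A]
    [Module.FaithfullyFlat A B] (hker : ker φ = range (Algebra.linearMap A B))
    (hφ : range φ ≠ ⊥) (h𝔣 : 𝔣 ≠ ⊥) :
    ∃ α : B, ∀ z : B ⧸ 𝔣.map (algebraMap A B), ∃! p : (A ⧸ 𝔣) × (A ⧸ 𝔣),
      z = Ideal.quotientMap _ (algebraMap A B) Ideal.le_comap_map p.1 +
        Ideal.quotientMap _ (algebraMap A B) Ideal.le_comap_map p.2 *
          Ideal.Quotient.mk (𝔣.map (algebraMap A B)) α := by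
  obtain ⟨x, hx⟩ := IsDedekindDomain.exists_sup_span_eq
    (Ideal.mul_le_right : 𝔣 * range φ ≤ range φ) (mul_ne_zero h𝔣 hφ)
  obtain ⟨α, rfl⟩ : x ∈ range φ := hx ▸ Ideal.mem_sup_right (Ideal.mem_span_singleton_self x)
  have hα : range φ ≤ Ideal.span {φ α} ⊔ 𝔣 * range φ := by
    rw [sup_comm]; exact hx.ge
  have hmk : ∀ (z : B) (e a : A), (Ideal.Quotient.mk _ z = Ideal.quotientMap _ (algebraMap A B)
      Ideal.le_comap_map (Ideal.Quotient.mk 𝔣 e) + Ideal.quotientMap _ (algebraMap A B)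
      Ideal.le_comap_map (Ideal.Quotient.mk 𝔣 a) * Ideal.Quotient.mk _ α) ↔
      z - (algebraMap A B e + algebraMap A B a * α) ∈ 𝔣.map (algebraMap A B) := by
    intro z e a
    rw [Ideal.quotientMap_mk, Ideal.quotientMap_mk, ← map_mul, ← map_add,
      Ideal.Quotient.mk_eq_mk_iff_sub_mem]
  refine ⟨α, fun z => ?_⟩
  obtain ⟨z, rfl⟩ := Ideal.Quotient.mk_surjective z
  obtain ⟨e, a, hz⟩ := exists_sub_add_mul_mem_map hker hα z
  refine ⟨(Ideal.Quotient.mk 𝔣 e, Ideal.Quotient.mk 𝔣 a), (hmk z e a).mpr hz, ?_⟩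
  rintro ⟨p, q⟩ hpq
  obtain ⟨e', rfl⟩ := Ideal.Quotient.mk_surjective p
  obtain ⟨a', rfl⟩ := Ideal.Quotient.mk_surjective q
  have hdiff := sub_mem hz ((hmk z e' a').mp hpq)
  rw [show z - (algebraMap A B e + algebraMap A B a * α) -
      (z - (algebraMap A B e' + algebraMap A B a' * α)) =
      algebraMap A B (e' - e) + algebraMap A B (a' - a) * α by simp only [map_sub]; ring] at hdiff
  obtain ⟨he, ha⟩ := mem_of_add_mul_mem_map hker.ge hφ hα hdiff
  exact Prod.ext (Ideal.Quotient.eq.mpr he) (Ideal.Quotient.eq.mpr ha)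

end LinearMap

theorem Submodule.exists_ker_eq_of_finrank_quotient_eq_one {F V : Type*} [Field F]
    [AddCommGroup V] [Module F V] (W : Submodule F V) (hW : Module.finrank F (V ⧸ W) = 1) :
    ∃ π : V →ₗ[F] F, ker π = W := by
  have : Module.Finite F (V ⧸ W) := Module.finite_of_finrank_eq_succ hW
  refine ⟨(LinearEquiv.ofFinrankEq _ F (by simpa using hW)).toLinearMap ∘ₗ W.mkQ, ?_⟩
  rw [LinearEquiv.ker_comp, Submodule.ker_mkQ]

theorem LinearMap.exists_ker_eq_ker_of_isFractionRing {A K M : Type*} [CommRing A] [IsDomain A]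
    [Field K] [Algebra A K] [IsFractionRing A K] [AddCommGroup M] [Module A M]
    [Module.Finite A M] (ψ : M →ₗ[A] K) : ∃ φ : M →ₗ[A] A, ker φ = ker ψ := by
  obtain ⟨c, hc, hint⟩ := FractionalIdeal.isFractional_of_fg (S := nonZeroDivisors A)
    (ψ.range_eq_map ▸ Module.Finite.fg_top.map ψ)
  let ι := LinearEquiv.ofInjective (Algebra.linearMap A K) (IsFractionRing.injective A K)
  let φ := ι.symm.toLinearMap ∘ₗ codRestrict _ (c • ψ) fun z => hint _ ⟨z, rfl⟩
  have hφ (z : M) : algebraMap A K (φ z) = algebraMap A K c * ψ z :=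
    (congrArg Subtype.val (ι.apply_symm_apply ⟨c • ψ z, hint _ ⟨z, rfl⟩⟩)).trans
      (Algebra.smul_def _ _)
  have hc0 : algebraMap A K c ≠ 0 :=
    IsFractionRing.to_map_ne_zero_of_mem_nonZeroDivisors hc
  refine ⟨φ, Submodule.ext fun z => ?_⟩
  rw [mem_ker, mem_ker, ← (IsFractionRing.injective A K).eq_iff, hφ, map_zero,
    mul_eq_zero, or_iff_right hc0]

namespace NumberField.RingOfIntegers

variable {K₀ K : Type*} [Field K₀] [Field K] [Algebra K₀ K]

theorem coe_mem_range_algebraMap_iff (z : 𝓞 K) :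
    (z : K) ∈ Set.range (algebraMap K₀ K) ↔ z ∈ Set.range (algebraMap (𝓞 K₀) (𝓞 K)) := by
  have hcomm (y : 𝓞 K₀) : algebraMap K₀ K y = algebraMap (𝓞 K₀) (𝓞 K) y :=
    (IsScalarTower.algebraMap_apply (𝓞 K₀) K₀ K y).symm.trans
      (IsScalarTower.algebraMap_apply (𝓞 K₀) (𝓞 K) K y)
  constructor
  · rintro ⟨y, hy⟩
    have hyint : IsIntegral ℤ y := by
      rw [← isIntegral_algebraMap_iff (algebraMap K₀ K).injective, hy]
      exact z.2
    exact ⟨⟨y, hyint⟩, RingOfIntegers.ext ((hcomm _).symm.trans hy)⟩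
  · rintro ⟨y, rfl⟩
    exact ⟨y, hcomm y⟩

theorem exists_linearMap_ker_eq_range [NumberField K₀] [NumberField K]
    (h2 : Module.finrank K₀ K = 2) :
    ∃ φ : 𝓞 K →ₗ[𝓞 K₀] 𝓞 K₀, ker φ = range (Algebra.linearMap (𝓞 K₀) (𝓞 K)) ∧ range φ ≠ ⊥ := by
  set W := range (Algebra.linearMap K₀ K)
  have hW : Module.finrank K₀ W = 1 :=
    (finrank_range_of_inj (algebraMap K₀ K).injective).trans (Module.finrank_self K₀)
  obtain ⟨π, hπ⟩ := W.exists_ker_eq_of_finrank_quotient_eq_one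
    (by have := W.finrank_quotient_add_finrank; omega)
  let ψ := π.restrictScalars (𝓞 K₀) ∘ₗ (IsScalarTower.toAlgHom (𝓞 K₀) (𝓞 K) K).toLinearMap
  have hψ : ker ψ = range (Algebra.linearMap (𝓞 K₀) (𝓞 K)) := Submodule.ext fun z => by
    have : ψ z = π z := rfl
    rw [mem_ker, this, ← mem_ker, hπ]
    exact coe_mem_range_algebraMap_iff z
  obtain ⟨φ, hφ⟩ := ψ.exists_ker_eq_ker_of_isFractionRing
  refine ⟨φ, hφ.trans hψ, fun hbot => ?_⟩
  have hψ0 : ker ψ = ⊤ := hφ ▸ ker_eq_top.mpr (range_eq_bot.mp hbot)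
  have hK : W = ⊤ := by
    refine eq_top_iff.mpr fun x _ => ?_
    obtain ⟨n, d, -, rfl⟩ := IsFractionRing.div_surjective (A := 𝓞 K) x
    have hint (z : 𝓞 K) : (z : K) ∈ W := by
      rw [← hπ]
      exact (hψ0 ▸ Submodule.mem_top : z ∈ ker ψ)
    obtain ⟨a, ha⟩ := hint n
    obtain ⟨b, hb⟩ := hint d
    exact ⟨a / b, by simp [← ha, ← hb]⟩
  rw [hK, finrank_top, h2] at hW
  omega

end NumberField.RingOfIntegers

/-- Let `K / K₀` be a quadratic extension of number fields with rings of integers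
`𝓞 K₀ ⊆ 𝓞 K`, and `𝔣₀` a nonzero ideal of `𝓞 K₀`, `R = 𝓞 K₀ ⧸ 𝔣₀`.  Then there is an
`α ∈ 𝓞 K` such that `𝓞 K ⧸ 𝔣₀ 𝓞 K = R · 1 ⊕ R · ᾱ`: every element of `𝓞 K ⧸ 𝔣₀ 𝓞 K` is
uniquely of the form `x · 1 + y · ᾱ` with `x, y ∈ R` (where `R` acts via the canonical
ring homomorphism `𝓞 K₀ ⧸ 𝔣₀ → 𝓞 K ⧸ 𝔣₀ 𝓞 K`). -/
theorem quotient_free_rank_two (K₀ K : Type*) [Field K₀] [NumberField K₀]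
    [Field K] [NumberField K] [Algebra K₀ K] (h2 : Module.finrank K₀ K = 2)
    (𝔣₀ : Ideal (𝓞 K₀)) (h𝔣₀ : 𝔣₀ ≠ ⊥) :
    ∃ α : 𝓞 K, ∀ z : (𝓞 K) ⧸ Ideal.map (algebraMap (𝓞 K₀) (𝓞 K)) 𝔣₀,
      ∃! p : ((𝓞 K₀) ⧸ 𝔣₀) × ((𝓞 K₀) ⧸ 𝔣₀),
        z = Ideal.quotientMap (Ideal.map (algebraMap (𝓞 K₀) (𝓞 K)) 𝔣₀)
              (algebraMap (𝓞 K₀) (𝓞 K)) Ideal.le_comap_map p.1 +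
            Ideal.quotientMap (Ideal.map (algebraMap (𝓞 K₀) (𝓞 K)) 𝔣₀)
              (algebraMap (𝓞 K₀) (𝓞 K)) Ideal.le_comap_map p.2 *
            Ideal.Quotient.mk (Ideal.map (algebraMap (𝓞 K₀) (𝓞 K)) 𝔣₀) α := by
  obtain ⟨φ, hker, hφ⟩ := RingOfIntegers.exists_linearMap_ker_eq_range h2
  exact φ.exists_existsUnique_quotientMap_add_mul hker hφ h𝔣₀
end

section
/- Let K₀ be a number field and K a quadratic field extension of K₀, with rings of integers O_{K₀} ⊆ O_K. For any nonzero ideal 𝔣₀ of O_{K₀}, the set O_{K₀} + 𝔣₀O_K (sums of an element of O_{K₀} and an element of the ideal of O_K generated by 𝔣₀) is an order in K containing O_{K₀}, and its conductor {x ∈ K : x·O_K ⊆ O_{K₀} + 𝔣₀O_K} equals 𝔣₀O_K. -/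
/-!
`𝓞 K₀ + 𝔣₀𝓞 K` is the preimage of `𝓞 K₀` in `𝓞 K ⧸ 𝔣₀𝓞 K`, hence a subring of `𝓞 K`, and it
contains `N(𝔣₀)·𝓞 K`, hence spans `K`. For the conductor, write `x = a + b` with `a ∈ 𝓞 K₀`,
`b ∈ 𝔣₀𝓞 K`; then `a·𝓞 K ⊆ 𝓞 K₀ + 𝔣₀𝓞 K`. Since `K ≠ K₀` there is a nonzero
`𝓞 K₀`-linear form `ψ : 𝓞 K → 𝓞 K₀` with `ψ 1 = 0`; applying it gives `a·I ⊆ 𝔣₀·I` for the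
nonzero ideal `I = ψ(𝓞 K)`, and cancelling `I` in the Dedekind domain `𝓞 K₀` gives `a ∈ 𝔣₀`.
-/

open NumberField

/-- The subset `𝓞 K₀ + 𝔣₀ 𝓞 K` of `K`: sums of an element of `𝓞 K₀` and an element of the
ideal of `𝓞 K` generated by the ideal `𝔣₀` of `𝓞 K₀`. -/
noncomputable def ordSet (K₀ K : Type*) [Field K₀] [NumberField K₀] [Field K]
    [NumberField K] [Algebra K₀ K] (𝔣₀ : Ideal (𝓞 K₀)) : Set K :=
  {z : K | ∃ a : 𝓞 K₀, ∃ b ∈ Ideal.map (algebraMap (𝓞 K₀) (𝓞 K)) 𝔣₀,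
    z = algebraMap K₀ K (algebraMap (𝓞 K₀) K₀ a) + algebraMap (𝓞 K) K b}

section RangeAddIdeal

variable (R : Type*) {A : Type*} [CommRing R] [CommRing A] [Algebra R A]

def Subalgebra.rangeAddIdeal (J : Ideal A) : Subalgebra R A :=
  (⊥ : Subalgebra R (A ⧸ J)).comap (Ideal.Quotient.mkₐ R J)

variable {R}

theorem Subalgebra.mem_rangeAddIdeal {J : Ideal A} {x : A} :
    x ∈ rangeAddIdeal R J ↔ ∃ r : R, ∃ j ∈ J, x = algebraMap R A r + j := by
  rw [rangeAddIdeal, mem_comap, Algebra.mem_bot]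
  refine exists_congr fun r => ?_
  rw [Ideal.Quotient.mkₐ_eq_mk, ← Ideal.Quotient.mk_algebraMap, Ideal.Quotient.eq]
  exact ⟨fun h => ⟨x - algebraMap R A r, by simpa using J.neg_mem h, by ring⟩,
    fun ⟨j, hj, hx⟩ => by simpa [hx] using J.neg_mem hj⟩

theorem Subalgebra.mem_rangeAddIdeal_of_mem {J : Ideal A} {x : A} (hx : x ∈ J) :
    x ∈ rangeAddIdeal R J :=
  mem_rangeAddIdeal.2 ⟨0, x, hx, by rw [map_zero, zero_add]⟩

end RangeAddIdeal

theorem Ideal.mem_of_span_singleton_mul_le_mul {R : Type*} [CommRing R] [IsDedekindDomain R]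
    {a : R} {𝔣 I : Ideal R} (hI : I ≠ ⊥) (h : Ideal.span {a} * I ≤ 𝔣 * I) : a ∈ 𝔣 :=
  Ideal.dvd_iff_le.1 ((mul_dvd_mul_iff_right hI).1 (Ideal.dvd_iff_le.2 h))
    (Ideal.mem_span_singleton_self a)

section Dedekind

variable {R A : Type*} [CommRing R] [IsDedekindDomain R] [CommRing A] [Algebra R A]
  {ψ : A →ₗ[R] R} {𝔣 : Ideal R}

theorem Ideal.mem_of_forall_mul_mem_rangeAddIdeal (hψ1 : ψ 1 = 0) (hψ : ψ ≠ 0) {a : R}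
    (h : ∀ y : A, algebraMap R A a * y ∈ Subalgebra.rangeAddIdeal R (𝔣.map (algebraMap R A))) :
    a ∈ 𝔣 := by
  have hψF : ((𝔣.map (algebraMap R A)).restrictScalars R).map ψ = 𝔣 * LinearMap.range ψ := by
    rw [← Ideal.smul_top_eq_map, Submodule.map_smul'', ← LinearMap.range_eq_map]
    rfl
  refine Ideal.mem_of_span_singleton_mul_le_mul (LinearMap.range_eq_bot.not.2 hψ) ?_
  rw [Ideal.span_singleton_mul_le_iff]
  rintro _ ⟨y, rfl⟩
  obtain ⟨c, b, hb, hy⟩ := Subalgebra.mem_rangeAddIdeal.1 (h y)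
  have hψy : a * ψ y = ψ b := by
    rw [← smul_eq_mul, ← map_smul, Algebra.smul_def, hy, map_add,
      Algebra.algebraMap_eq_smul_one, map_smul, hψ1, smul_zero, zero_add]
  rw [hψy, ← hψF]
  exact Submodule.mem_map_of_mem hb

theorem Subalgebra.forall_mul_mem_rangeAddIdeal_iff (hψ1 : ψ 1 = 0) (hψ : ψ ≠ 0) (x : A) :
    (∀ y, x * y ∈ rangeAddIdeal R (𝔣.map (algebraMap R A))) ↔ x ∈ 𝔣.map (algebraMap R A) := by
  refine ⟨fun hx => ?_, fun hx y => mem_rangeAddIdeal_of_mem (Ideal.mul_mem_right y _ hx)⟩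
  obtain ⟨a, b, hb, rfl⟩ := mem_rangeAddIdeal.1 (by simpa using hx 1)
  have ha : a ∈ 𝔣 := Ideal.mem_of_forall_mul_mem_rangeAddIdeal hψ1 hψ fun y => by
    have := sub_mem (hx y) (mem_rangeAddIdeal_of_mem (Ideal.mul_mem_right y _ hb))
    rwa [add_mul, add_sub_cancel_right] at this
  exact add_mem (Ideal.mem_map_of_mem _ ha) hb

end Dedekind

theorem LinearMap.exists_integral_multiple {R M F : Type*} [CommRing R] [IsDomain R] [Field F]
    [Algebra R F] [IsFractionRing R F] [AddCommGroup M] [Module R M] [Module.Finite R M]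
    (f : M →ₗ[R] F) :
    ∃ d ≠ (0 : R), ∃ ψ : M →ₗ[R] R, ∀ m, algebraMap R F (ψ m) = d • f m := by
  obtain ⟨d, hd, hint⟩ := FractionalIdeal.isFractional_of_fg (S := nonZeroDivisors R)
    (LinearMap.range_eq_map f ▸ Module.Finite.fg_top.map f)
  have hmem : ∀ m, (d • f) m ∈ LinearMap.range (Algebra.linearMap R F) := fun m =>
    hint _ (LinearMap.mem_range_self f m)
  let e := LinearEquiv.ofInjective (Algebra.linearMap R F) (IsFractionRing.injective R F)
  refine ⟨d, nonZeroDivisors.ne_zero hd, e.symm.toLinearMap ∘ₗ (d • f).codRestrict _ hmem,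
    fun m => ?_⟩
  have := LinearEquiv.ofInjective_apply (f := Algebra.linearMap R F)
    (h := IsFractionRing.injective R F) (e.symm ((d • f).codRestrict _ hmem m))
  rw [LinearEquiv.apply_symm_apply] at this
  exact this.symm

theorem NumberField.exists_zsmul_eq_coe_ringOfIntegers {K : Type*} [Field K] [NumberField K]
    (x : K) : ∃ n : ℤ, n ≠ 0 ∧ ∃ y : 𝓞 K, (y : K) = n • x := by
  obtain ⟨n, hn, hint⟩ :=
    ((IsFractionRing.isAlgebraic_iff ℤ ℚ K).2 (.of_finite ℚ x)).exists_integral_multiple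
  exact ⟨n, hn, ⟨n • x, hint⟩, rfl⟩

theorem NumberField.exists_linearMap_ne_zero_map_one_eq_zero {K₀ K : Type*} [Field K₀] [NumberField K₀]
    [Field K] [NumberField K] [Algebra K₀ K] (h : Module.finrank K₀ K ≠ 1) :
    ∃ ψ : 𝓞 K →ₗ[𝓞 K₀] 𝓞 K₀, ψ 1 = 0 ∧ ψ ≠ 0 := by
  obtain ⟨φ, hφ, h1⟩ := (K₀ ∙ (1 : K)).exists_le_ker_of_lt_top <| lt_top_iff_ne_top.2 fun htop =>
    h (by rw [← finrank_top, ← htop, finrank_span_singleton one_ne_zero])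
  have hφ1 : φ 1 = 0 := h1 (Submodule.mem_span_singleton_self 1)
  let f : 𝓞 K →ₗ[𝓞 K₀] K₀ :=
    φ.restrictScalars (𝓞 K₀) ∘ₗ (IsScalarTower.toAlgHom (𝓞 K₀) (𝓞 K) K).toLinearMap
  have : Module.Finite (𝓞 K₀) (𝓞 K) := Module.Finite.of_restrictScalars_finite ℤ _ _
  obtain ⟨d, hd, ψ, hψ⟩ := f.exists_integral_multiple
  refine ⟨ψ, IsFractionRing.injective (𝓞 K₀) K₀ ?_, fun hψ0 => hφ ?_⟩
  · simp [hψ, f, hφ1]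
  · ext x
    obtain ⟨n, hn, y, hy⟩ := exists_zsmul_eq_coe_ringOfIntegers x
    have h0 : d • φ (n • x) = 0 := by
      rw [← hy]
      exact (hψ y).symm.trans (by rw [hψ0, LinearMap.zero_apply, map_zero])
    rw [map_zsmul, smul_eq_zero, smul_eq_zero] at h0
    exact (h0.resolve_left hd).resolve_left hn

section OrdSubalgebra

variable {K₀ K : Type*} [Field K₀] [Field K] [Algebra K₀ K]

variable (K₀ K) in
noncomputable def ordSubalgebra (𝔣₀ : Ideal (𝓞 K₀)) : Subalgebra ℤ K :=
  ((Subalgebra.rangeAddIdeal (𝓞 K₀) (𝔣₀.map (algebraMap (𝓞 K₀) (𝓞 K)))).restrictScalars ℤ).map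
    (IsScalarTower.toAlgHom ℤ (𝓞 K) K)

variable {𝔣₀ : Ideal (𝓞 K₀)}

theorem coe_mem_ordSubalgebra_iff {w : 𝓞 K} : (w : K) ∈ ordSubalgebra K₀ K 𝔣₀ ↔
    w ∈ Subalgebra.rangeAddIdeal (𝓞 K₀) (𝔣₀.map (algebraMap (𝓞 K₀) (𝓞 K))) :=
  RingOfIntegers.coe_injective.mem_set_image

variable [NumberField K₀] [NumberField K]

theorem coe_ordSubalgebra : (ordSubalgebra K₀ K 𝔣₀ : Set K) = ordSet K₀ K 𝔣₀ := by
  ext x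
  simp only [ordSubalgebra, Subalgebra.coe_map, Subalgebra.coe_restrictScalars, Set.mem_image,
    SetLike.mem_coe, Subalgebra.mem_rangeAddIdeal, ordSet, Set.mem_ofPred_eq,
    IsScalarTower.coe_toAlgHom']
  constructor
  · rintro ⟨_, ⟨a, b, hb, rfl⟩, rfl⟩
    exact ⟨a, b, hb, by simp [← IsScalarTower.algebraMap_apply]⟩
  · rintro ⟨a, b, hb, rfl⟩
    exact ⟨_, ⟨a, b, hb, rfl⟩, by simp [← IsScalarTower.algebraMap_apply]⟩

theorem realIntegers_subset_ordSet : realIntegers K₀ K ⊆ ordSet K₀ K 𝔣₀ := by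
  rintro _ ⟨a, rfl⟩
  exact ⟨a, 0, zero_mem _, by rw [map_zero, add_zero]⟩

theorem isOrder_ordSubalgebra (h𝔣₀ : 𝔣₀ ≠ ⊥) : IsOrder K (ordSubalgebra K₀ K 𝔣₀) := by
  refine ⟨?_, eq_top_iff.2 fun x _ => ?_⟩
  · rw [ordSubalgebra, Subalgebra.map_toSubmodule]
    exact (IsNoetherian.noetherian _).map _
  obtain ⟨n, hn, y, hy⟩ := exists_zsmul_eq_coe_ringOfIntegers x
  set m := Ideal.absNorm 𝔣₀
  have hm : (m : 𝓞 K) ∈ 𝔣₀.map (algebraMap (𝓞 K₀) (𝓞 K)) := by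
    simpa using Ideal.mem_map_of_mem (algebraMap (𝓞 K₀) (𝓞 K)) (Ideal.absNorm_mem 𝔣₀)
  have hmy : ((m * y : 𝓞 K) : K) ∈ ordSubalgebra K₀ K 𝔣₀ :=
    coe_mem_ordSubalgebra_iff.2 (Subalgebra.mem_rangeAddIdeal_of_mem (Ideal.mul_mem_right _ _ hm))
  have hx : x = ((m * n : ℚ))⁻¹ • ((m * y : 𝓞 K) : K) := by
    have hm0 : (m : K) ≠ 0 := Nat.cast_ne_zero.2 (Ideal.absNorm_eq_zero_iff.not.2 h𝔣₀)
    have hn0 : (n : K) ≠ 0 := Int.cast_ne_zero.2 hn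
    rw [Rat.smul_def]
    push_cast [hy, zsmul_eq_mul]
    field_simp
  rw [hx]
  exact Submodule.smul_mem _ _ (Submodule.subset_span hmy)

theorem conductorSet_ordSet (h : Module.finrank K₀ K ≠ 1) :
    conductorSet K (ordSet K₀ K 𝔣₀) =
      algebraMap (𝓞 K) K '' (𝔣₀.map (algebraMap (𝓞 K₀) (𝓞 K)) : Set (𝓞 K)) := by
  obtain ⟨ψ, hψ1, hψ⟩ := exists_linearMap_ne_zero_map_one_eq_zero h
  have hconductor (w : 𝓞 K) : (w : K) ∈ conductorSet K (ordSet K₀ K 𝔣₀) ↔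
      w ∈ 𝔣₀.map (algebraMap (𝓞 K₀) (𝓞 K)) := by
    simp only [conductorSet, Set.mem_ofPred_eq, ← coe_ordSubalgebra, SetLike.mem_coe,
      ← map_mul, ← RingOfIntegers.coe_eq_algebraMap,
      coe_mem_ordSubalgebra_iff]
    exact Subalgebra.forall_mul_mem_rangeAddIdeal_iff hψ1 hψ w
  ext x
  refine ⟨fun hx => ?_, ?_⟩
  · obtain ⟨w, -, rfl⟩ : x ∈ ordSubalgebra K₀ K 𝔣₀ := by simpa [← coe_ordSubalgebra] using hx 1
    exact ⟨w, (hconductor w).1 hx, rfl⟩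
  · rintro ⟨w, hw, rfl⟩
    exact (hconductor w).2 hw

end OrdSubalgebra

/-- Let `K / K₀` be a quadratic extension of number fields.  For any nonzero ideal `𝔣₀` of
`𝓞 K₀`, the set `𝓞 K₀ + 𝔣₀ 𝓞 K` is an order of `K` containing `𝓞 K₀`, and its conductor
`{x ∈ K : x · 𝓞 K ⊆ 𝓞 K₀ + 𝔣₀ 𝓞 K}` is `𝔣₀ 𝓞 K`. -/
theorem ordSet_isOrder_and_conductor (K₀ K : Type*) [Field K₀] [NumberField K₀]
    [Field K] [NumberField K] [Algebra K₀ K] (h2 : Module.finrank K₀ K = 2)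
    (𝔣₀ : Ideal (𝓞 K₀)) (h𝔣₀ : 𝔣₀ ≠ ⊥) :
    (∃ O : Subalgebra ℤ K, (O : Set K) = ordSet K₀ K 𝔣₀ ∧ IsOrder K O ∧
        realIntegers K₀ K ⊆ (O : Set K)) ∧
      conductorSet K (ordSet K₀ K 𝔣₀) =
        algebraMap (𝓞 K) K '' (Ideal.map (algebraMap (𝓞 K₀) (𝓞 K)) 𝔣₀ : Set (𝓞 K)) :=
  ⟨⟨ordSubalgebra K₀ K 𝔣₀, coe_ordSubalgebra, isOrder_ordSubalgebra h𝔣₀,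
      by rw [coe_ordSubalgebra]; exact realIntegers_subset_ordSet⟩,
    conductorSet_ordSet (by omega)⟩
end

section
/- Let K₀ be a number field and K a quadratic field extension of K₀, with rings of integers O_{K₀} ⊆ O_K. Let O be an order in K containing O_{K₀}, and let 𝔣 = {x ∈ K : x·O_K ⊆ O} be its conductor. Then O = O_{K₀} + (𝔣 ∩ O_{K₀})·O_K. -/
/-!
Pick `ω ∈ O` outside `K₀` and let `π : K → K₀` be the `ω`-coordinate for the `K₀`-basis `1, ω`,
so that `ker π = K₀`. Since `O ⊇ 𝓞 K₀`, an integral `x` lies in `O` exactly when `π x ∈ J := π(O)`.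
The `𝓞 K₀`-modules `J ⊆ I := π(𝓞 K)` are fractional ideals of a Dedekind domain, so `I` is
invertible and `J = (J : I) • I`. Every `r ∈ (J : I)` lies in the conductor, because
`π (r 𝓞 K) = r I ⊆ J`. Hence for `z ∈ O` there is `w ∈ (𝔣 ∩ 𝓞 K₀) 𝓞 K` with `π w = π z`, and then
`z - w` is an integral element of `K₀`, i.e. lies in `𝓞 K₀`.
-/

open NumberField

open scoped nonZeroDivisors

theorem Submodule.le_colon_smul_of_le {R F : Type*} [CommRing R] [IsDedekindDomain R] [Field F]
    [Algebra R F] [IsFractionRing R F] {I J : Submodule R F} (hI : I.FG) (hI0 : I ≠ ⊥)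
    (hJI : J ≤ I) : J ≤ J.colon (I : Set F) • I := by
  set I' : FractionalIdeal R⁰ F := ⟨I, FractionalIdeal.isFractional_of_fg hI⟩
  set J' : FractionalIdeal R⁰ F := ⟨J, FractionalIdeal.isFractional_of_le (J := I') hJI⟩
  have hI'0 : I' ≠ 0 := FractionalIdeal.coeToSubmodule_ne_bot.mp hI0
  intro b hb
  have hb' : b ∈ J' / I' * I' := by rw [div_mul_cancel₀ J' hI'0]; exact hb
  refine FractionalIdeal.mul_induction_on hb' (fun q hq r hr => ?_) (fun _ _ => add_mem)
  have hqJ : ∀ y ∈ I, q * y ∈ J := (FractionalIdeal.mem_div_iff_of_ne_zero hI'0).mp hq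
  obtain ⟨s, rfl⟩ : ∃ s : R, algebraMap R F s = q := by
    have : q ∈ I' / I' := (FractionalIdeal.mem_div_iff_of_ne_zero hI'0).mpr
      fun y hy => hJI (hqJ y hy)
    rwa [div_self hI'0, FractionalIdeal.mem_one_iff] at this
  rw [← Algebra.smul_def]
  exact Submodule.smul_mem_smul
    (Submodule.mem_colon.mpr fun y hy => by rw [Algebra.smul_def]; exact hqJ y hy) hr

section QuadraticExtension

variable {K₀ K : Type*} [Field K₀] [Ring K] [Nontrivial K] [Algebra K₀ K]

theorem exists_mem_notMem_bot_of_span_eq_top {F : Type*} [Field F] [Algebra F K₀] [Algebra F K]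
    [IsScalarTower F K₀ K] (hK : Module.finrank K₀ K ≠ 1) {s : Set K}
    (hs : Submodule.span F s = ⊤) : ∃ x ∈ s, x ∉ (⊥ : Subalgebra K₀ K) := by
  by_contra! h
  have hle : Submodule.span F s ≤
      (Subalgebra.toSubmodule (⊥ : Subalgebra K₀ K)).restrictScalars F :=
    Submodule.span_le.mpr h
  exact hK (Subalgebra.bot_eq_top_iff_finrank_eq_one.mp
    (eq_top_iff.mpr fun x _ => hle (hs ▸ Submodule.mem_top)))

theorem exists_linearMap_eq_one_of_finrank_eq_two (h2 : Module.finrank K₀ K = 2) {ω : K}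
    (hω : ω ∉ (⊥ : Subalgebra K₀ K)) :
    ∃ π : K →ₗ[K₀] K₀, π ω = 1 ∧ ∀ x, π x = 0 → x ∈ (⊥ : Subalgebra K₀ K) := by
  have hli : LinearIndependent K₀ ![1, ω] :=
    (LinearIndependent.pair_iff' one_ne_zero).mpr fun a ha =>
      hω (Algebra.mem_bot.mpr ⟨a, by rw [Algebra.algebraMap_eq_smul_one, ha]⟩)
  have hcard : Fintype.card (Fin 2) = Module.finrank K₀ K := by rw [Fintype.card_fin, h2]
  let B := basisOfLinearIndependentOfCardEqFinrank hli hcard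
  have hB : ⇑B = ![1, ω] := coe_basisOfLinearIndependentOfCardEqFinrank hli hcard
  refine ⟨B.coord 1, ?_, fun x hx => Algebra.mem_bot.mpr ⟨B.repr x 0, ?_⟩⟩
  · rw [← show B 1 = ω by simp [hB]]
    simp
  · have hx' : B.repr x 1 = 0 := hx
    have := B.sum_repr x
    simpa [Fin.sum_univ_two, hB, hx', Algebra.algebraMap_eq_smul_one] using this

end QuadraticExtension

section RingOfIntegers

variable {K₀ K : Type*} [Field K₀] [NumberField K₀] [Field K] [NumberField K] [Algebra K₀ K]

theorem realIntegers_subset_integralClosure : realIntegers K₀ K ⊆ integralClosure ℤ K := by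
  rintro _ ⟨a, rfl⟩
  exact a.isIntegral_coe.map (algebraMap K₀ K).toIntAlgHom

theorem mem_realIntegers_of_isIntegral {x : K} (hx : x ∈ (⊥ : Subalgebra K₀ K))
    (hint : IsIntegral ℤ x) : x ∈ realIntegers K₀ K := by
  obtain ⟨a, rfl⟩ := hx
  exact ⟨⟨a, (isIntegral_algebraMap_iff (algebraMap K₀ K).injective).mp hint⟩, rfl⟩

theorem span_conductorSet_subset (O : AddSubmonoid K) :
    (Submodule.span (𝓞 K) (conductorSet K O) : Set K) ⊆ O := by
  intro w hw
  suffices ∀ u : 𝓞 K, w * algebraMap (𝓞 K) K u ∈ O by simpa using this 1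
  induction hw using Submodule.span_induction with
  | mem x hx => exact hx
  | zero => simp [O.zero_mem]
  | add x y _ _ hx hy => intro u; rw [add_mul]; exact O.add_mem (hx u) (hy u)
  | smul v x _ hx => intro u; simpa [Algebra.smul_def, mul_assoc, mul_left_comm] using hx (v * u)

variable (K₀) in
def Subalgebra.toRealIntegersSubmodule (A : Subalgebra ℤ K) (hA : realIntegers K₀ K ⊆ A) :
    Submodule (𝓞 K₀) K where
  carrier := A
  add_mem' := A.add_mem
  zero_mem' := A.zero_mem
  smul_mem' r x hx := by rw [Algebra.smul_def]; exact A.mul_mem (hA ⟨r, rfl⟩) hx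

def coordSubmodule (π : K →ₗ[K₀] K₀) (A : Subalgebra ℤ K) (hA : realIntegers K₀ K ⊆ A) :
    Submodule (𝓞 K₀) K₀ :=
  (A.toRealIntegersSubmodule K₀ hA).map (π.restrictScalars (𝓞 K₀))

theorem mem_coordSubmodule {π : K →ₗ[K₀] K₀} {A : Subalgebra ℤ K} {hA : realIntegers K₀ K ⊆ A}
    {b : K₀} : b ∈ coordSubmodule π A hA ↔ ∃ x ∈ A, π x = b :=
  Submodule.mem_map

theorem coordSubmodule_integralClosure_fg (π : K →ₗ[K₀] K₀) :
    (coordSubmodule π (integralClosure ℤ K) realIntegers_subset_integralClosure).FG := by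
  refine Submodule.FG.map _ (Submodule.FG.of_restrictScalars ℤ ?_)
  exact Module.Finite.iff_fg.mp (inferInstanceAs (Module.Finite ℤ (𝓞 K)))

section Coordinate

variable {π : K →ₗ[K₀] K₀} (hπ : ∀ x, π x = 0 → x ∈ (⊥ : Subalgebra K₀ K))
  {O : Subalgebra ℤ K} (hRM : realIntegers K₀ K ⊆ O) (hOint : O ≤ integralClosure ℤ K)
include hπ hRM hOint

theorem mem_of_isIntegral_of_coord_mem {x : K} (hx : IsIntegral ℤ x)
    (hπx : π x ∈ coordSubmodule π O hRM) : x ∈ O := by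
  obtain ⟨z, hz, hπz⟩ := mem_coordSubmodule.mp hπx
  have hxz : x - z ∈ realIntegers K₀ K :=
    mem_realIntegers_of_isIntegral (hπ _ (by rw [map_sub, hπz, sub_self])) (hx.sub (hOint hz))
  simpa using O.add_mem (hRM hxz) hz

theorem algebraMap_mem_conductorSet_of_mem_colon {r : 𝓞 K₀}
    (hr : r ∈ (coordSubmodule π O hRM).colon
      (coordSubmodule π (integralClosure ℤ K) realIntegers_subset_integralClosure : Set K₀)) :
    algebraMap (𝓞 K₀) K r ∈ conductorSet K O ∩ realIntegers K₀ K := by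
  refine ⟨fun y => mem_of_isIntegral_of_coord_mem hπ hRM hOint ?_ ?_, ⟨r, rfl⟩⟩
  · exact (realIntegers_subset_integralClosure ⟨r, rfl⟩ : IsIntegral ℤ _).mul y.isIntegral_coe
  · rw [← Algebra.smul_def, LinearMap.map_smul_of_tower]
    exact Submodule.mem_colon.mp hr _ (mem_coordSubmodule.mpr ⟨_, y.isIntegral_coe, rfl⟩)

theorem exists_mem_span_conductorSet_coord_eq
    (hI0 : coordSubmodule π (integralClosure ℤ K) realIntegers_subset_integralClosure ≠ ⊥)
    {z : K} (hz : z ∈ O) :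
    ∃ w ∈ Submodule.span (𝓞 K) (conductorSet K O ∩ realIntegers K₀ K), π w = π z := by
  have hJI : coordSubmodule π O hRM ≤
      coordSubmodule π (integralClosure ℤ K) realIntegers_subset_integralClosure :=
    Submodule.map_mono hOint
  have hπz := Submodule.le_colon_smul_of_le (coordSubmodule_integralClosure_fg π) hI0 hJI
    (mem_coordSubmodule.mpr ⟨z, hz, rfl⟩)
  refine Submodule.smul_induction_on hπz (fun r hr b hb => ?_) ?_
  · obtain ⟨y, hy, rfl⟩ := mem_coordSubmodule.mp hb
    refine ⟨r • y, ?_, LinearMap.map_smul_of_tower π r y⟩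
    have := Submodule.smul_mem _ (⟨y, hy⟩ : 𝓞 K) (Submodule.subset_span
      (algebraMap_mem_conductorSet_of_mem_colon hπ hRM hOint hr))
    rwa [Algebra.smul_def, mul_comm, ← Algebra.smul_def] at this
  · rintro _ _ ⟨w₁, hw₁, h₁⟩ ⟨w₂, hw₂, h₂⟩
    exact ⟨w₁ + w₂, add_mem hw₁ hw₂, by rw [map_add, h₁, h₂]⟩

end Coordinate

end RingOfIntegers

/-- Let `K / K₀` be a quadratic extension of number fields, `O` an order of `K` containing
the ring of integers of `K₀`, and `𝔣` its conductor.  Then `O = 𝓞 K₀ + (𝔣 ∩ 𝓞 K₀) · 𝓞 K`,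
where `(𝔣 ∩ 𝓞 K₀) · 𝓞 K` is the `𝓞 K`-submodule of `K` generated by `𝔣 ∩ 𝓞 K₀`. -/
theorem maxRM_order_eq_realIntegers_add_conductor (K₀ K : Type*) [Field K₀] [NumberField K₀]
    [Field K] [NumberField K] [Algebra K₀ K] (h2 : Module.finrank K₀ K = 2)
    (O : Subalgebra ℤ K) (hO : IsOrder K O)
    (hRM : realIntegers K₀ K ⊆ (O : Set K)) :
    (O : Set K) = {z : K | ∃ a ∈ realIntegers K₀ K,
      ∃ b ∈ (Submodule.span (𝓞 K)
          (conductorSet K (O : Set K) ∩ realIntegers K₀ K) : Submodule (𝓞 K) K),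
        z = a + b} := by
  obtain ⟨hOfg, hOspan⟩ := hO
  have hOint : O ≤ integralClosure ℤ K := fun x hx => IsIntegral.of_mem_of_fg O hOfg x hx
  obtain ⟨ω, hωO, hω⟩ := exists_mem_notMem_bot_of_span_eq_top (K₀ := K₀) (by omega) hOspan
  obtain ⟨π, hπω, hπ⟩ := exists_linearMap_eq_one_of_finrank_eq_two h2 hω
  have hI0 : coordSubmodule π (integralClosure ℤ K) realIntegers_subset_integralClosure ≠ ⊥ :=
    (Submodule.ne_bot_iff _).mpr ⟨1, mem_coordSubmodule.mpr ⟨ω, hOint hωO, hπω⟩, one_ne_zero⟩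
  have hspan : (Submodule.span (𝓞 K) (conductorSet K O ∩ realIntegers K₀ K) : Set K) ⊆ O :=
    fun _ hw => span_conductorSet_subset O.toAddSubmonoid
      (Submodule.span_mono Set.inter_subset_left hw)
  refine Set.Subset.antisymm (fun z hz => ?_) ?_
  · obtain ⟨w, hw, hπw⟩ := exists_mem_span_conductorSet_coord_eq hπ hRM hOint hI0 hz
    have hzw : z - w ∈ realIntegers K₀ K := mem_realIntegers_of_isIntegral
      (hπ _ (by rw [map_sub, hπw, sub_self])) ((hOint hz).sub (hOint (hspan hw)))
    exact ⟨z - w, hzw, w, hw, by ring⟩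
  · rintro _ ⟨a, ha, b, hb, rfl⟩
    exact O.add_mem (hRM ha) (hspan hb)
end

section
/- Let K₀ be a number field and K a quadratic field extension of K₀, with rings of integers O_{K₀} ⊆ O_K. The map sending a nonzero ideal 𝔣₀ of O_{K₀} to O_{K₀} + 𝔣₀O_K is a bijection between the set of nonzero ideals of O_{K₀} and the set of orders of K containing O_{K₀}. -/
/-!
Fix a `K₀`-linear form `φ : K → K₀` whose kernel is `K₀`; it exists because `[K : K₀] = 2`.
As `𝓞 K₀` is integrally closed, `K₀ ∩ 𝓞 K = 𝓞 K₀`, so an `𝓞 K₀`-module `P` with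
`𝓞 K₀ ⊆ P ⊆ 𝓞 K` is determined by its image `φ(P)`, a submodule of the fractional ideal
`𝔞 = φ(𝓞 K)`. Fractional ideals of the Dedekind domain `𝓞 K₀` are invertible, so
`φ(P) = 𝔣₀ 𝔞` for a unique ideal `𝔣₀`, and `φ(𝓞 K₀ + 𝔣₀ 𝓞 K) = 𝔣₀ 𝔞` as well; hence
`P = 𝓞 K₀ + 𝔣₀ 𝓞 K`. An order containing `𝓞 K₀` is such a `P`, because its elements are
integral, and `𝔣₀ ≠ 0` because it spans `K` over `ℚ` and hence is not contained in `K₀`.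
-/

open NumberField

section

variable {R M N : Type*} [Ring R] [AddCommGroup M] [Module R M] [AddCommGroup N] [Module R N]
  {φ : M →ₗ[R] N} {A S P Q : Submodule R M}

theorem Submodule.le_of_map_le_of_ker_inf_le (hker : LinearMap.ker φ ⊓ S ≤ A) (hAQ : A ≤ Q)
    (hPS : P ≤ S) (hQS : Q ≤ S) (h : P.map φ ≤ Q.map φ) : P ≤ Q := by
  rw [LinearMap.map_le_map_iff] at h
  calc P ≤ (Q ⊔ LinearMap.ker φ) ⊓ S := le_inf h hPS
    _ = Q ⊔ LinearMap.ker φ ⊓ S := sup_inf_assoc_of_le _ hQS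
    _ ≤ Q := sup_le le_rfl (hker.trans hAQ)

theorem Submodule.eq_of_map_eq_of_ker_inf_le (hker : LinearMap.ker φ ⊓ S ≤ A) (hAP : A ≤ P)
    (hAQ : A ≤ Q) (hPS : P ≤ S) (hQS : Q ≤ S) (h : P.map φ = Q.map φ) : P = Q :=
  le_antisymm (le_of_map_le_of_ker_inf_le hker hAQ hPS hQS h.le)
    (le_of_map_le_of_ker_inf_le hker hAP hQS hPS h.ge)

end

theorem Submodule.map_sup_smul_of_le_ker {R M N : Type*} [CommSemiring R] [AddCommMonoid M]
    [Module R M] [AddCommMonoid N] [Module R N] {φ : M →ₗ[R] N} {A : Submodule R M}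
    (hA : A ≤ LinearMap.ker φ) (I : Ideal R) (S : Submodule R M) :
    (A ⊔ I • S).map φ = I • S.map φ := by
  rw [Submodule.map_sup, Submodule.map_smul'', LinearMap.le_ker_iff_map.1 hA, bot_sup_eq]

theorem IsLocalization.coeSubmodule_mul_eq_smul {R A : Type*} [CommSemiring R] [CommSemiring A]
    [Algebra R A] (I : Ideal R) (N : Submodule R A) : coeSubmodule A I * N = I • N := by
  apply le_antisymm
  · rw [Submodule.mul_le]
    rintro _ ⟨i, hi, rfl⟩ y hy
    rw [Algebra.linearMap_apply, ← Algebra.smul_def]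
    exact Submodule.smul_mem_smul hi hy
  · rw [Submodule.smul_le]
    intro r hr n hn
    rw [Algebra.smul_def]
    exact Submodule.mul_mem_mul (Submodule.mem_map_of_mem hr) hn

namespace FractionalIdeal

theorem coe_coeIdeal_mul {R P : Type*} [CommRing R] [CommRing P] [Algebra R P] {S : Submonoid R}
    (I : Ideal R) (J : FractionalIdeal S P) :
    ((I * J : FractionalIdeal S P) : Submodule R P) = I • (J : Submodule R P) := by
  rw [coe_mul, coe_coeIdeal, IsLocalization.coeSubmodule_mul_eq_smul]

end FractionalIdeal

section

open FractionalIdeal nonZeroDivisors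

variable {R F : Type*} [CommRing R] [IsDedekindDomain R] [Field F] [Algebra R F]
  [IsFractionRing R F] {𝔞 : Submodule R F}

theorem Submodule.exists_ideal_smul_eq_of_le (h𝔞 : 𝔞.FG) (h𝔞0 : 𝔞 ≠ ⊥) {𝔠 : Submodule R F}
    (h : 𝔠 ≤ 𝔞) : ∃ 𝔟 : Ideal R, 𝔟 • 𝔞 = 𝔠 := by
  let J : FractionalIdeal R⁰ F := ⟨𝔞, isFractional_of_fg h𝔞⟩
  let C : FractionalIdeal R⁰ F := ⟨𝔠, isFractional_of_fg (h𝔞.of_le h)⟩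
  have hJ : J ≠ 0 := coeToSubmodule_ne_bot.1 h𝔞0
  obtain ⟨𝔟, h𝔟⟩ := le_one_iff_exists_coeIdeal.1 <|
    calc C * J⁻¹ ≤ J * J⁻¹ := mul_le_mul_left (show C ≤ J from h) _
      _ = 1 := mul_inv_cancel₀ hJ
  refine ⟨𝔟, ?_⟩
  change 𝔟 • (J : Submodule R F) = C
  rw [← coe_coeIdeal_mul, h𝔟, mul_assoc, inv_mul_cancel₀ hJ, mul_one]

theorem Submodule.ideal_smul_left_injective (h𝔞 : 𝔞.FG) (h𝔞0 : 𝔞 ≠ ⊥) :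
    Function.Injective fun 𝔟 : Ideal R ↦ 𝔟 • 𝔞 := by
  let J : FractionalIdeal R⁰ F := ⟨𝔞, isFractional_of_fg h𝔞⟩
  intro 𝔟 𝔟' h
  dsimp only at h
  apply coeIdeal_injective (K := F)
  apply mul_right_cancel₀ (coeToSubmodule_ne_bot.1 h𝔞0 : J ≠ 0)
  exact coeToSubmodule_injective <|
    (coe_coeIdeal_mul 𝔟 J).trans (h.trans (coe_coeIdeal_mul 𝔟' J).symm)

theorem Submodule.existsUnique_eq_sup_ideal_smul {M : Type*} [AddCommGroup M] [Module R M]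
    {φ : M →ₗ[R] F} {A S P : Submodule R M} (hS : S.FG) (hker : LinearMap.ker φ ⊓ S = A)
    (hSφ : ¬ S ≤ LinearMap.ker φ) (hAP : A ≤ P) (hPS : P ≤ S) :
    ∃! 𝔟 : Ideal R, P = A ⊔ 𝔟 • S := by
  have hA : A ≤ LinearMap.ker φ := hker ▸ inf_le_left
  have h𝔞0 : S.map φ ≠ ⊥ := mt LinearMap.le_ker_iff_map.2 hSφ
  obtain ⟨𝔟, h𝔟⟩ := exists_ideal_smul_eq_of_le (hS.map φ) h𝔞0 (map_mono hPS)
  have hAS : A ⊔ 𝔟 • S ≤ S := sup_le (hker ▸ inf_le_right) smul_le_right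
  refine ⟨𝔟, eq_of_map_eq_of_ker_inf_le hker.le hAP le_sup_left hPS hAS ?_, ?_⟩
  · rw [map_sup_smul_of_le_ker hA, h𝔟]
  · rintro 𝔣 rfl
    exact ideal_smul_left_injective (hS.map φ) h𝔞0
      ((map_sup_smul_of_le_ker hA 𝔣 S).symm.trans h𝔟.symm)

end

section

variable {F E : Type*} [Field F] [Ring E] [Nontrivial E] [Algebra F E]

theorem exists_linearMap_ker_eq_one (h : Module.finrank F E = 2) :
    ∃ φ : E →ₗ[F] F, LinearMap.ker φ = 1 := by
  have : FiniteDimensional F E := Module.finite_of_finrank_eq_succ h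
  have h1 : Module.finrank F (1 : Submodule F E) = 1 := by
    rw [← Algebra.toSubmodule_bot, Subalgebra.finrank_toSubmodule, Subalgebra.finrank_bot]
  have hq : Module.finrank F (E ⧸ (1 : Submodule F E)) = Module.finrank F F := by
    have := Submodule.finrank_quotient_add_finrank (1 : Submodule F E)
    rw [h1, h] at this
    rw [Module.finrank_self]
    omega
  refine ⟨(LinearEquiv.ofFinrankEq _ _ hq).toLinearMap ∘ₗ (1 : Submodule F E).mkQ, ?_⟩
  rw [LinearEquiv.ker_comp, Submodule.ker_mkQ]

theorem not_subset_one_of_span_eq_top {k : Type*} [CommSemiring k] [Algebra k F] [Algebra k E]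
    [IsScalarTower k F E] (h : Module.finrank F E ≠ 1) {s : Set E}
    (hs : Submodule.span k s = ⊤) : ¬ s ⊆ (1 : Submodule F E) := by
  intro hs1
  apply h
  rw [← Subalgebra.bot_eq_top_iff_finrank_eq_one, eq_top_iff]
  intro x _
  have hspan : Submodule.span k s ≤ (1 : Submodule F E).restrictScalars k :=
    Submodule.span_le.2 hs1
  rw [← Subalgebra.mem_toSubmodule, Algebra.toSubmodule_bot]
  exact hspan (hs ▸ Submodule.mem_top)

end

open Pointwise in
theorem Submodule.span_smul_eq_top_of_ne_zero {k K : Type*} [CommSemiring k] [Field K] [Algebra k K]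
    {c : K} (hc : c ≠ 0) {s : Set K} (hs : span k s = ⊤) : span k (c • s) = ⊤ := by
  rw [← Submodule.smul_span, hs]
  exact SetLike.coe_injective (by simp [Set.smul_set_univ₀ hc])

namespace Subalgebra

variable {R A : Type*} [CommSemiring R] [CommSemiring A] [Algebra R A]

theorem mul_mem_ideal_smul (B : Subalgebra R A) (I : Ideal R) {x y : A} (hx : x ∈ B)
    (hy : y ∈ I • toSubmodule B) : x * y ∈ I • toSubmodule B := by
  refine Submodule.smul_induction_on hy (fun r hr b hb ↦ ?_) (fun u v hu hv ↦ ?_)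
  · rw [mul_smul_comm]
    exact Submodule.smul_mem_smul hr (B.mul_mem hx hb)
  · rw [mul_add]
    exact add_mem hu hv

theorem one_sup_smul_le_toSubmodule (B : Subalgebra R A) (I : Ideal R) :
    1 ⊔ I • toSubmodule B ≤ toSubmodule B :=
  sup_le (Submodule.one_le.2 B.one_mem) Submodule.smul_le_right

theorem mul_mem_one_sup_smul (B : Subalgebra R A) (I : Ideal R) {x y : A}
    (hx : x ∈ 1 ⊔ I • toSubmodule B) (hy : y ∈ 1 ⊔ I • toSubmodule B) :
    x * y ∈ 1 ⊔ I • toSubmodule B := by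
  have hyB : y ∈ B := one_sup_smul_le_toSubmodule B I hy
  obtain ⟨a, ha, u, hu, rfl⟩ := Submodule.mem_sup.1 hx
  obtain ⟨r, rfl⟩ := Submodule.mem_one.1 ha
  rw [add_mul, ← Algebra.smul_def, mul_comm u]
  exact add_mem (Submodule.smul_mem _ r hy)
    (Submodule.mem_sup_right (mul_mem_ideal_smul B I hyB hu))

def oneSupSmul (I : Ideal R) (B : Subalgebra R A) : Subalgebra R A :=
  (1 ⊔ I • toSubmodule B).toSubalgebra (Submodule.mem_sup_left (Submodule.one_le.1 le_rfl))
    fun _ _ ↦ mul_mem_one_sup_smul B I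

theorem toSubmodule_oneSupSmul (I : Ideal R) (B : Subalgebra R A) :
    toSubmodule (oneSupSmul I B) = 1 ⊔ I • toSubmodule B :=
  Submodule.toSubalgebra_toSubmodule _ _ _

end Subalgebra

def Subalgebra.ofAlgebraMapMem {R S A : Type*} [CommSemiring R] [CommSemiring S] [Semiring A]
    [Algebra R A] [Algebra S A] (O : Subalgebra S A) (h : ∀ r : R, algebraMap R A r ∈ O) :
    Subalgebra R A :=
  { O with algebraMap_mem' := h }

section NumberField

variable (K₀ K : Type*) [Field K₀] [Field K] [Algebra K₀ K]

noncomputable def ringOfIntegersSubalgebra : Subalgebra (𝓞 K₀) K :=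
  (IsScalarTower.toAlgHom (𝓞 K₀) (𝓞 K) K).range

variable {K₀ K} in
theorem mem_ringOfIntegersSubalgebra {x : K} :
    x ∈ ringOfIntegersSubalgebra K₀ K ↔ IsIntegral ℤ x := by
  rw [IsIntegralClosure.isIntegral_iff (A := 𝓞 K)]
  rfl

theorem fg_ringOfIntegersSubalgebra [NumberField K₀] [NumberField K] :
    (Subalgebra.toSubmodule (ringOfIntegersSubalgebra K₀ K)).FG := by
  change (LinearMap.range (IsScalarTower.toAlgHom (𝓞 K₀) (𝓞 K) K).toLinearMap).FG
  rw [← Submodule.map_top]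
  exact Module.Finite.fg_top.map _

theorem span_ringOfIntegersSubalgebra [NumberField K] :
    Submodule.span ℚ (ringOfIntegersSubalgebra K₀ K : Set K) = ⊤ := by
  rw [eq_top_iff, ← (integralBasis K).span_eq]
  refine Submodule.span_mono ?_
  rintro _ ⟨i, rfl⟩
  rw [integralBasis_apply]
  exact ⟨_, rfl⟩

theorem restrictScalars_one_inf_ringOfIntegersSubalgebra :
    (1 : Submodule K₀ K).restrictScalars (𝓞 K₀) ⊓
      Subalgebra.toSubmodule (ringOfIntegersSubalgebra K₀ K) = 1 := by
  refine le_antisymm ?_ ?_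
  · rintro x ⟨hx, hxO⟩
    obtain ⟨a, rfl⟩ := Submodule.mem_one.1 hx
    have ha : IsIntegral ℤ a := (isIntegral_algebraMap_iff
      (FaithfulSMul.algebraMap_injective K₀ K)).1 (mem_ringOfIntegersSubalgebra.1 hxO)
    exact Submodule.mem_one.2 ⟨⟨a, ha⟩, (IsScalarTower.algebraMap_apply _ K₀ K _).symm⟩
  · rw [le_inf_iff, Submodule.one_le, Submodule.one_le]
    exact ⟨Submodule.mem_one.2 ⟨1, map_one _⟩, Subalgebra.one_mem _⟩

theorem realIntegers_eq [NumberField K₀] [NumberField K] :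
    realIntegers K₀ K = ((1 : Submodule (𝓞 K₀) K) : Set K) := by
  ext x
  simp only [realIntegers, Set.mem_range, SetLike.mem_coe, Submodule.mem_one,
    ← IsScalarTower.algebraMap_apply]

theorem ordSet_eq [NumberField K₀] [NumberField K] (𝔣 : Ideal (𝓞 K₀)) :
    ordSet K₀ K 𝔣 =
      ((1 ⊔ 𝔣 • Subalgebra.toSubmodule (ringOfIntegersSubalgebra K₀ K) : Submodule (𝓞 K₀) K) :
        Set K) := by
  have h𝔣S : 𝔣 • Subalgebra.toSubmodule (ringOfIntegersSubalgebra K₀ K) =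
      ((Ideal.map (algebraMap (𝓞 K₀) (𝓞 K)) 𝔣).restrictScalars (𝓞 K₀)).map
        (IsScalarTower.toAlgHom (𝓞 K₀) (𝓞 K) K).toLinearMap := by
    rw [← Ideal.smul_top_eq_map, Submodule.map_smul'', Submodule.map_top]
    rfl
  ext z
  simp only [ordSet, h𝔣S, Set.mem_ofPred_eq, SetLike.mem_coe, Submodule.mem_sup,
    Submodule.mem_one, Submodule.mem_map, Submodule.restrictScalars_mem]
  constructor
  · rintro ⟨a, b, hb, rfl⟩
    exact ⟨_, ⟨a, (IsScalarTower.algebraMap_apply _ _ _ a).symm⟩, _, ⟨b, hb, rfl⟩, rfl⟩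
  · rintro ⟨_, ⟨a, rfl⟩, _, ⟨b, hb, rfl⟩, rfl⟩
    exact ⟨a, b, hb, by rw [← IsScalarTower.algebraMap_apply]; rfl⟩

theorem isOrder_oneSupSmul [NumberField K₀] [NumberField K] {𝔣 : Ideal (𝓞 K₀)} (h𝔣 : 𝔣 ≠ ⊥) :
    IsOrder K ((Subalgebra.oneSupSmul 𝔣 (ringOfIntegersSubalgebra K₀ K)).restrictScalars ℤ) := by
  set S := ringOfIntegersSubalgebra K₀ K
  obtain ⟨c, hc, hc0⟩ := Submodule.exists_mem_ne_zero_of_ne_bot h𝔣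
  have hc0' : algebraMap (𝓞 K₀) K c ≠ 0 :=
    (map_ne_zero_iff _ (FaithfulSMul.algebraMap_injective _ _)).2 hc0
  refine ⟨?_, ?_⟩
  · rw [Subalgebra.restrictScalars_toSubmodule, Subalgebra.toSubmodule_oneSupSmul]
    exact (fg_ringOfIntegersSubalgebra K₀ K).restrictScalars.of_le
      (Submodule.restrictScalars_mono ℤ (S.one_sup_smul_le_toSubmodule 𝔣))
  · rw [eq_top_iff, ← Submodule.span_smul_eq_top_of_ne_zero hc0'
      (span_ringOfIntegersSubalgebra K₀ K)]
    refine Submodule.span_mono ?_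
    rintro _ ⟨x, hx, rfl⟩
    change algebraMap (𝓞 K₀) K c * x ∈ Subalgebra.toSubmodule (Subalgebra.oneSupSmul 𝔣 S)
    rw [Subalgebra.toSubmodule_oneSupSmul, ← Algebra.smul_def]
    exact Submodule.mem_sup_right (Submodule.smul_mem_smul hc hx)

variable {K₀ K} in
theorem existsUnique_ordSet_eq [NumberField K₀] [NumberField K] (h2 : Module.finrank K₀ K = 2)
    (O : Subalgebra (𝓞 K₀) K) (hO : IsOrder K (O.restrictScalars ℤ)) :
    ∃! 𝔣 : Ideal (𝓞 K₀), 𝔣 ≠ ⊥ ∧ (O : Set K) = ordSet K₀ K 𝔣 := by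
  set S := ringOfIntegersSubalgebra K₀ K
  obtain ⟨hfg, hspan⟩ := hO
  obtain ⟨φ, hφ⟩ := exists_linearMap_ker_eq_one h2
  set ψ := φ.restrictScalars (𝓞 K₀)
  have hker : LinearMap.ker ψ = (1 : Submodule K₀ K).restrictScalars (𝓞 K₀) := by
    rw [LinearMap.ker_restrictScalars, hφ]
  have hOS : Subalgebra.toSubmodule O ≤ Subalgebra.toSubmodule S := fun x hx ↦
    mem_ringOfIntegersSubalgebra.2 (IsIntegral.of_mem_of_fg (O.restrictScalars ℤ) hfg x hx)
  have hOψ : ¬ Subalgebra.toSubmodule O ≤ LinearMap.ker ψ := by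
    rw [hker]
    exact fun h ↦ not_subset_one_of_span_eq_top (by omega) hspan h
  obtain ⟨𝔣, h𝔣, huniq⟩ := Submodule.existsUnique_eq_sup_ideal_smul
    (fg_ringOfIntegersSubalgebra K₀ K)
    (hker ▸ restrictScalars_one_inf_ringOfIntegersSubalgebra K₀ K) (fun h ↦ hOψ (hOS.trans h))
    (Submodule.one_le.2 O.one_mem) hOS
  have hcoe (𝔟 : Ideal (𝓞 K₀)) :
      (O : Set K) = ordSet K₀ K 𝔟 ↔
        Subalgebra.toSubmodule O = 1 ⊔ 𝔟 • Subalgebra.toSubmodule S := by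
    rw [ordSet_eq, ← Subalgebra.coe_toSubmodule]
    exact SetLike.coe_set_eq
  refine ⟨𝔣, ⟨?_, (hcoe 𝔣).2 h𝔣⟩, fun 𝔟 h𝔟 ↦ huniq 𝔟 ((hcoe 𝔟).1 h𝔟.2)⟩
  rintro rfl
  apply hOψ
  rw [h𝔣, Submodule.bot_smul, sup_bot_eq, hker]
  exact (restrictScalars_one_inf_ringOfIntegersSubalgebra K₀ K).ge.trans inf_le_left

end NumberField

/-- Let `K / K₀` be a quadratic extension of number fields.  The map `𝔣₀ ↦ 𝓞 K₀ + 𝔣₀ 𝓞 K`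
is a bijection between the set of nonzero ideals of `𝓞 K₀` and the set of orders of `K`
containing `𝓞 K₀`: every such set is an order containing `𝓞 K₀`, and every order of `K`
containing `𝓞 K₀` arises from exactly one nonzero ideal `𝔣₀`. -/
theorem orders_maxRM_bijection (K₀ K : Type*) [Field K₀] [NumberField K₀]
    [Field K] [NumberField K] [Algebra K₀ K] (h2 : Module.finrank K₀ K = 2) :
    (∀ 𝔣₀ : Ideal (𝓞 K₀), 𝔣₀ ≠ ⊥ →
      ∃ O : Subalgebra ℤ K, (O : Set K) = ordSet K₀ K 𝔣₀ ∧ IsOrder K O ∧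
        realIntegers K₀ K ⊆ (O : Set K)) ∧
    (∀ O : Subalgebra ℤ K, IsOrder K O → realIntegers K₀ K ⊆ (O : Set K) →
      ∃! 𝔣₀ : Ideal (𝓞 K₀), 𝔣₀ ≠ ⊥ ∧ (O : Set K) = ordSet K₀ K 𝔣₀) := by
  refine ⟨fun 𝔣 h𝔣 ↦ ⟨_, ?_, isOrder_oneSupSmul K₀ K h𝔣, ?_⟩, fun O hO hsub ↦ ?_⟩
  · rw [ordSet_eq, ← Subalgebra.toSubmodule_oneSupSmul]
    rfl
  · rw [realIntegers_eq]
    exact fun x hx ↦ Submodule.mem_sup_left hx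
  · have hR (r : 𝓞 K₀) : algebraMap (𝓞 K₀) K r ∈ O :=
      hsub (by rw [realIntegers_eq]; exact Submodule.mem_one.2 ⟨r, rfl⟩)
    exact existsUnique_ordSet_eq h2 (O.ofAlgebraMapMem hR) hO
end

section
/- Let A be a principal ideal domain with fraction field F, let L be a separable quadratic field extension of F, let B be the integral closure of A in L, and let O be an A-subalgebra of B containing a basis of L over F (equivalently O ⊗_A F = L). Then O is a free A-module of rank 2 admitting a basis of the form (1, α) for some α ∈ O, and O = A[α], the A-subalgebra generated by α. -/
/-!
Since `O` lies in the integral closure of the PID `A` in the separable extension `L/F`, it is a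
finitely generated torsion-free `A`-module spanning `L`, hence free of rank `[L : F] = 2`.
The element `1` is primitive in `O`: if `1 = a • w` with `w ∈ O`, then `a⁻¹ = w` is integral over
the integrally closed `A`, so `a` is a unit. Over a PID this means the coordinates of `1` in any
basis generate the unit ideal, and a unimodular vector of a rank-two free module is the first
vector of a basis `(1, α)`. Finally `O = A·1 + A·α ⊆ A[α] ⊆ O`.
-/

open Module

namespace Module.Basis

variable {R M : Type*} [CommRing R] [AddCommGroup M] [Module R M]

theorem span_range_repr_eq_top_of_forall_isUnit [IsPrincipalIdealRing R] {ι : Type*} [Fintype ι]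
    (b : Basis ι R M) {v : M} (hv : ∀ (a : R) (w : M), a • w = v → IsUnit a) :
    Ideal.span (Set.range (b.repr v)) = ⊤ := by
  obtain ⟨g, hg⟩ := Submodule.IsPrincipal.principal (Ideal.span (Set.range (b.repr v)))
  have hdvd (i : ι) : ∃ a, a * g = b.repr v i := by
    rw [← Ideal.mem_span_singleton', ← Ideal.submodule_span_eq, ← hg]
    exact Ideal.subset_span ⟨i, rfl⟩
  choose a ha using hdvd
  have hgw : g • ∑ i, a i • b i = v := by
    simp only [Finset.smul_sum, smul_smul, mul_comm g, ha, b.sum_repr]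
  rw [hg, Ideal.submodule_span_eq, Ideal.span_singleton_eq_top]
  exact hv g _ hgw

theorem exists_basis_fin_two_zero_eq (b : Basis (Fin 2) R M) {v : M}
    (hv : Ideal.span (Set.range (b.repr v)) = ⊤) : ∃ c : Basis (Fin 2) R M, c 0 = v := by
  obtain ⟨c, hc⟩ := Ideal.mem_span_range_iff_exists_fun.mp (hv ▸ Submodule.mem_top (x := 1))
  rw [Fin.sum_univ_two] at hc
  set u : Fin 2 → M := ![v, -c 1 • b 0 + c 0 • b 1]
  have hdet : b.det u = 1 := by
    rw [b.det_apply, Matrix.det_fin_two]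
    simp [u, Basis.toMatrix_apply]
    linear_combination hc
  obtain ⟨hli, hsp⟩ := (is_basis_iff_det b).mpr (hdet ▸ isUnit_one)
  exact ⟨Basis.mk hli hsp.ge, by simp [u]⟩

end Module.Basis

namespace Subalgebra

variable {R S : Type*} [CommSemiring R] [Semiring S] [Algebra R S]

theorem eq_adjoin_of_basis_fin_two {T : Subalgebra R S} (b : Basis (Fin 2) R T)
    (h0 : (b 0 : S) = 1) : T = Algebra.adjoin R {(b 1 : S)} := by
  refine le_antisymm ?_ (Algebra.adjoin_le (Set.singleton_subset_iff.mpr (b 1).2))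
  have hb : Set.range b ⊆ (toSubmodule (Algebra.adjoin R {(b 1 : S)})).comap
      (toSubmodule T).subtype := by
    rw [Set.range_subset_iff, Fin.forall_fin_two]
    exact ⟨show (b 0 : S) ∈ Algebra.adjoin R _ from h0 ▸ one_mem _,
      Algebra.self_mem_adjoin_singleton R _⟩
  have := Submodule.span_le.mpr hb
  rw [b.span_eq] at this
  exact fun z hz => this (Submodule.mem_top (x := ⟨z, hz⟩))

end Subalgebra

theorem IsIntegrallyClosed.isUnit_of_isIntegral_of_mul_eq_one {A F L : Type*} [CommRing A]
    [IsDomain A] [IsIntegrallyClosed A] [Field F] [Algebra A F] [IsFractionRing A F] [Field L]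
    [Algebra F L] [Algebra A L] [IsScalarTower A F L] {a : A} {w : L} (hw : IsIntegral A w)
    (h : algebraMap A L a * w = 1) : IsUnit a := by
  rw [IsScalarTower.algebraMap_apply A F L] at h
  have ha : algebraMap A F a ≠ 0 := by
    rintro ha
    simp [ha] at h
  rw [eq_inv_of_mul_eq_one_right h, ← map_inv₀,
    isIntegral_algebraMap_iff (algebraMap F L).injective] at hw
  obtain ⟨u, hu⟩ := IsIntegrallyClosed.isIntegral_iff.mp hw
  refine IsUnit.of_mul_eq_one u (IsFractionRing.injective A F ?_)
  rw [map_mul, hu, map_one, mul_inv_cancel₀ ha]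

theorem Subalgebra.isLattice_of_le_integralClosure {A F L : Type*} [CommRing A] [IsDomain A]
    [IsIntegrallyClosed A] [IsNoetherianRing A] [Field F] [Algebra A F] [IsFractionRing A F]
    [Field L] [Algebra F L] [Algebra A L] [IsScalarTower A F L] [FiniteDimensional F L]
    [Algebra.IsSeparable F L] {O : Subalgebra A L} (hOB : O ≤ integralClosure A L)
    (hspan : Submodule.span F (O : Set L) = ⊤) : (Subalgebra.toSubmodule O).IsLattice F where
  fg :=
    have := IsIntegralClosure.isNoetherian A F L (integralClosure A L)
    have := isNoetherian_of_le (s := Subalgebra.toSubmodule O)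
      (t := Subalgebra.toSubmodule (integralClosure A L)) hOB
    Module.Finite.iff_fg.mp inferInstance
  span_eq_top := hspan

/-- Let `A` be a principal ideal domain with fraction field `F`, `L` a separable quadratic
field extension of `F`, `B` the integral closure of `A` in `L`, and `O` an `A`-subalgebra
of `B` with `O ⊗_A F = L` (i.e. `O` spans `L` over `F`).  Then `O` is a free `A`-module of
rank 2 with a basis of the form `(1, α)` for some `α ∈ O`, and `O = A[α]`. -/
theorem quadratic_order_monogenic (A F L : Type*) [CommRing A] [IsDomain A]
    [IsPrincipalIdealRing A] [Field F] [Algebra A F] [IsFractionRing A F]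
    [Field L] [Algebra F L] [Algebra A L] [IsScalarTower A F L]
    [Algebra.IsSeparable F L] (h2 : Module.finrank F L = 2)
    (O : Subalgebra A L) (hOB : O ≤ integralClosure A L)
    (hspan : Submodule.span F (O : Set L) = ⊤) :
    ∃ α : L, α ∈ O ∧
      (∃ b : Module.Basis (Fin 2) A O, ((b 0 : O) : L) = 1 ∧ ((b 1 : O) : L) = α) ∧
      O = Algebra.adjoin A {α} := by
  have : FiniteDimensional F L := Module.finite_of_finrank_eq_succ h2
  have : (Subalgebra.toSubmodule O).IsLattice F :=
    Subalgebra.isLattice_of_le_integralClosure hOB hspan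
  have hrank : finrank A O = 2 := by
    rw [← h2]
    exact finrank_eq_of_rank_eq ((Submodule.IsLattice.rank' F (Subalgebra.toSubmodule O)).trans
      (finrank_eq_rank F L).symm)
  have : Module.Free A O := Submodule.IsLattice.free F (Subalgebra.toSubmodule O)
  have : Module.Finite A O := Submodule.IsLattice.finite F (Subalgebra.toSubmodule O)
  let b := Module.finBasisOfFinrankEq A O hrank
  have hprim (a : A) (w : O) (h : a • w = 1) : IsUnit a :=
    IsIntegrallyClosed.isUnit_of_isIntegral_of_mul_eq_one (F := F) (hOB w.2)
      (by simpa [Algebra.smul_def] using congrArg Subtype.val h)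
  obtain ⟨c, hc⟩ :=
    b.exists_basis_fin_two_zero_eq (b.span_range_repr_eq_top_of_forall_isUnit hprim)
  have hc0 : (c 0 : L) = 1 := by rw [hc]; rfl
  exact ⟨c 1, (c 1).2, ⟨c, hc0, rfl⟩, Subalgebra.eq_adjoin_of_basis_fin_two c hc0⟩
end
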